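/- arXiv:1905.12404 — 12 statements merged into one kernel-verified Lean document; each statement's English description precedes it below -/
import Mathlib

section
/- Let D be a nonempty finite set, let r ≥ 2 and l ≥ 1 be integers, and let g be a real number with g ≥ 1 + l/(r−1). Let α : D → Fin r → ℝ satisfy, for every x ∈ D, 0 ≤ α x 0 < α x 1 < ⋯ < α x (r−1) < 1. Let r' be an integer with 0 < r' < r, set r'' = r − r', and let n' : D → Fin r → ℕ take values in {0,1} with Σ_i n' x i = r' for every x ∈ D; set n'' x i = 1 − n' x i. Then r''·(Σ_{x∈D} Σ_i (n' x i)·(α x i)) − r'·(Σ_{x∈D} Σ_i (n'' x i)·(α x i)) ≤ r'·r''·(g − 1) + Σ_{x∈D} Σ_{i>j} (n' x i)·(n'' x j) − l. -/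
/-!
Pointwise, `r''·Σ n'ᵢαᵢ − r'·Σ n''ⱼαⱼ` is the double sum `Σᵢⱼ n'ᵢ n''ⱼ (αᵢ − αⱼ)`. Since the
weights increase and lie in `[0, 1)`, a term with `j ≥ i` is `≤ 0` and one with `j < i` is at most
`n'ᵢ n''ⱼ`, which bounds the left side by the inversion count `Σ_{i>j} n'ᵢ n''ⱼ`. The remaining
`l ≤ r'r''(g − 1)` follows from `g − 1 ≥ l/(r − 1)` and `r − 1 ≤ r'(r − r')`.
-/

open Finset

theorem sum_sum_mul_mul_sub {ι R : Type*} [Fintype ι] [CommRing R] (a b α : ι → R) :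
    ∑ i, ∑ j, a i * b j * (α i - α j)
      = (∑ j, b j) * ∑ i, a i * α i - (∑ i, a i) * ∑ j, b j * α j := by
  rw [sum_mul_sum, sum_mul_sum, sum_comm (f := fun j i => b j * (a i * α i)), ← sum_sub_distrib]
  exact sum_congr rfl fun i _ => by rw [← sum_sub_distrib]; exact sum_congr rfl fun j _ => by ring

theorem sum_mul_sub_sum_mul_le_sum_lt {ι : Type*} [Fintype ι] [LinearOrder ι] {α a b : ι → ℝ}
    (hα : Monotone α) (hα0 : ∀ i, 0 ≤ α i) (hα1 : ∀ i, α i ≤ 1) (ha : 0 ≤ a) (hb : 0 ≤ b) :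
    (∑ j, b j) * ∑ i, a i * α i - (∑ i, a i) * ∑ j, b j * α j
      ≤ ∑ i, ∑ j ∈ univ.filter (fun j => j < i), a i * b j := by
  rw [← sum_sum_mul_mul_sub]
  refine sum_le_sum fun i _ => ?_
  rw [sum_filter]
  refine sum_le_sum fun j _ => ?_
  have hab : 0 ≤ a i * b j := mul_nonneg (ha i) (hb j)
  split_ifs with hji
  · exact mul_le_of_le_one_right hab (by linarith [hα0 j, hα1 i])
  · exact mul_nonpos_of_nonneg_of_nonpos hab (sub_nonpos.2 (hα (not_lt.1 hji)))

theorem sub_one_le_mul_sub {k n : ℕ} (hk : 0 < k) (hkn : k < n) :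
    (n : ℝ) - 1 ≤ k * ((n : ℝ) - k) := by
  have hk' : (1 : ℝ) ≤ k := by exact_mod_cast hk
  have hkn' : (k : ℝ) + 1 ≤ n := by exact_mod_cast hkn
  nlinarith

theorem stmt_0 {D : Type*} [Fintype D]
    (r l : ℕ) (hr : 2 ≤ r)
    (g : ℝ) (hg : 1 + (l : ℝ) / ((r : ℝ) - 1) ≤ g)
    (α : D → Fin r → ℝ)
    (hα0 : ∀ x : D, 0 ≤ α x ⟨0, by omega⟩)
    (hαmono : ∀ x : D, StrictMono (α x))
    (hα1 : ∀ x : D, α x ⟨r - 1, by omega⟩ < 1)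
    (r' r'' : ℕ) (hr'0 : 0 < r') (hr'r : r' < r) (hr'' : r'' = r - r')
    (n' n'' : D → Fin r → ℕ)
    (hn01 : ∀ (x : D) (i : Fin r), n' x i = 0 ∨ n' x i = 1)
    (hsum : ∀ x : D, ∑ i, n' x i = r')
    (hn'' : ∀ (x : D) (i : Fin r), n'' x i = 1 - n' x i) :
    (r'' : ℝ) * (∑ x : D, ∑ i, (n' x i : ℝ) * α x i)
      - (r' : ℝ) * (∑ x : D, ∑ i, (n'' x i : ℝ) * α x i)
      ≤ (r' : ℝ) * (r'' : ℝ) * (g - 1)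
        + (∑ x : D, ∑ i : Fin r, ∑ j ∈ Finset.univ.filter (fun j => j < i),
            (n' x i : ℝ) * (n'' x j : ℝ))
        - (l : ℝ) := by
  have hsum'' (x : D) : ∑ i, n'' x i = r'' := by
    simp only [hn'']
    rw [sum_tsub_distrib _ fun i _ => by have := hn01 x i; omega, hsum x]
    simp [hr'']
  have hpoint (x : D) :
      (r'' : ℝ) * (∑ i, (n' x i : ℝ) * α x i) - r' * ∑ i, (n'' x i : ℝ) * α x i
        ≤ ∑ i : Fin r, ∑ j ∈ univ.filter (fun j => j < i), (n' x i : ℝ) * (n'' x j) := by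
    have h := sum_mul_sub_sum_mul_le_sum_lt (hαmono x).monotone
      (fun i => (hα0 x).trans ((hαmono x).monotone (Nat.zero_le i.val)))
      (fun i => ((hαmono x).monotone (Nat.le_sub_one_of_lt i.isLt)).trans (hα1 x).le)
      (fun i => (n' x i).cast_nonneg) (fun i => (n'' x i).cast_nonneg)
    rwa [← Nat.cast_sum, ← Nat.cast_sum, hsum x, hsum'' x] at h
  have hl : (l : ℝ) ≤ r' * r'' * (g - 1) := by
    have hr1 : (0 : ℝ) < r - 1 := by
      have : (2 : ℝ) ≤ r := by exact_mod_cast hr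
      linarith
    have hlg : (l : ℝ) ≤ (g - 1) * (r - 1) := (div_le_iff₀ hr1).1 (by linarith)
    have hg1 : 0 ≤ g - 1 := by linarith [div_nonneg l.cast_nonneg hr1.le]
    have hrr : (r : ℝ) - 1 ≤ r' * r'' := by
      rw [hr'', Nat.cast_sub hr'r.le]
      exact sub_one_le_mul_sub hr'0 hr'r
    nlinarith
  have hsum_point := sum_le_sum fun x (_ : x ∈ univ) => hpoint x
  rw [sum_sub_distrib, ← mul_sum, ← mul_sum] at hsum_point
  linarith
end

section
/- Let R be a commutative ring which is an integral domain and a unique factorization domain, and let M : Matrix (Fin n) (Fin m) R. Then all 2×2 minors of M vanish, i.e. M i j * M k l = M i l * M k j for all i, k ∈ Fin n and j, l ∈ Fin m, if and only if there exist A : Fin n → R and B : Fin m → R such that M i j = A i * B j for all i, j. -/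
theorem stmt_2 {R : Type*} [CommRing R] [IsDomain R] [UniqueFactorizationMonoid R]
    {n m : ℕ} (M : Matrix (Fin n) (Fin m) R) :
    (∀ (i k : Fin n) (j l : Fin m), M i j * M k l = M i l * M k j) ↔
    ∃ (A : Fin n → R) (B : Fin m → R), ∀ i j, M i j = A i * B j := by
  constructor
  · intro h
    by_cases h0 : ∀ i j, M i j = 0
    · exact ⟨0, 0, fun i j => by simp [h0]⟩
    push_neg at h0
    obtain ⟨i0, j0, hM0⟩ := h0
    letI : StrongNormalizationMonoid R := UniqueFactorizationMonoid.normalizationMonoid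
    letI : StrongNormalizedGCDMonoid R := UniqueFactorizationMonoid.toStrongNormalizedGCDMonoid R
    set g : R := Finset.univ.gcd (fun j => M i0 j) with hg
    have hgdvd : ∀ j, g ∣ M i0 j := fun j => Finset.gcd_dvd (Finset.mem_univ j)
    choose b hb using hgdvd
    have hgne : g ≠ 0 := by
      intro hgz
      exact hM0 (Finset.gcd_eq_zero_iff.mp (hg ▸ hgz) j0 (Finset.mem_univ j0))
    have hgcdb : IsUnit (Finset.univ.gcd b) := by
      have key : g = normalize g * Finset.univ.gcd b := by
        conv_lhs => rw [hg, show (fun j => M i0 j) = fun j => g * b j from funext hb]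
        exact Finset.gcd_mul_left
      rw [normalize_apply] at key
      have key2 : g * 1 = g * (Finset.univ.gcd b * ↑(normUnit g)) := by
        rw [mul_one]; linear_combination key
      exact IsUnit.of_mul_eq_one _ (mul_left_cancel₀ hgne key2).symm
    have hbj0 : b j0 ≠ 0 := by
      intro hz
      apply hM0
      rw [hb j0, hz, mul_zero]
    have hdvd : ∀ i, b j0 ∣ M i j0 := by
      intro i
      have h1 : ∀ j ∈ Finset.univ, b j0 ∣ M i j0 * b j := by
        intro j _
        refine ⟨M i j, ?_⟩
        have h2 := h i i0 j0 j
        rw [hb j, hb j0] at h2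
        apply mul_left_cancel₀ hgne
        ring_nf
        ring_nf at h2
        linear_combination h2
      have h3 : b j0 ∣ Finset.univ.gcd (fun j => M i j0 * b j) := Finset.dvd_gcd h1
      rw [Finset.gcd_mul_left] at h3
      have h4 : normalize (M i j0) * Finset.univ.gcd b ∣ M i j0 := by
        rw [hgcdb.mul_right_dvd]
        exact normalize_dvd_iff.mpr dvd_rfl
      exact h3.trans h4
    choose A hA using hdvd
    refine ⟨A, b, fun i j => ?_⟩
    have h2 := h i i0 j j0
    rw [hb j, hb j0, hA i] at h2
    have hne : g * b j0 ≠ 0 := mul_ne_zero hgne hbj0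
    apply mul_left_cancel₀ hne
    linear_combination h2
  · rintro ⟨A, B, hAB⟩ i k j l
    rw [hAB, hAB, hAB, hAB]; ring
end

section
/- Let R be a commutative ring which is an integral domain and a unique factorization domain, let n ≥ 1, and let Φ : Matrix (Fin n) (Fin n) R ≃ₗ[R] Matrix (Fin n) (Fin n) R be an R-linear automorphism. Then there exist matrices A, B : Matrix (Fin n) (Fin n) R such that Φ X = A * X * B for every X if and only if for all i, i', k, k', j, j', l, l' ∈ Fin n one has Φ(E j l) i k * Φ(E j' l') i' k' = Φ(E j l') i k' * Φ(E j' l) i' k. -/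
open Finset in
lemma rank_one_factor {R : Type*} [CommRing R] [IsDomain R] [UniqueFactorizationMonoid R]
    {ι : Type*} [Fintype ι] [DecidableEq ι] (N : ι → ι → R)
    (h : ∀ x x' y y', N x y * N x' y' = N x y' * N x' y) :
    ∃ a b : ι → R, ∀ x y, N x y = a x * b y := by
  classical
  letI := UniqueFactorizationMonoid.normalizationMonoid (α := R)
  letI := UniqueFactorizationMonoid.toStrongNormalizedGCDMonoid R
  by_cases hN : ∀ x y, N x y = 0
  · exact ⟨0, 0, fun x y => by simp [hN]⟩
  push_neg at hN
  obtain ⟨p, q, hpq⟩ := hN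
  set g := Finset.univ.gcd (fun y => N p y) with hg
  have hgdvd : ∀ y, g ∣ N p y := fun y => Finset.gcd_dvd (mem_univ y)
  have hg0 : g ≠ 0 := fun h0 => hpq (Finset.gcd_eq_zero_iff.1 h0 q (mem_univ q))
  choose b hb using hgdvd
  have hgcdb : Finset.univ.gcd b = 1 := by
    have : g = normalize g * Finset.univ.gcd b := by
      conv_lhs => rw [hg]
      rw [← Finset.gcd_mul_left]
      exact Finset.gcd_congr rfl (fun y _ => hb y)
    have h1 : g * 1 = g * (↑(normUnit g) * Finset.univ.gcd b) := by
      rw [mul_one]; conv_lhs => rw [this, normalize_apply]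
      ring
    have h2 := mul_left_cancel₀ hg0 h1
    have hG : IsUnit (Finset.univ.gcd b) :=
      IsUnit.of_mul_eq_one _ (by rw [mul_comm]; exact h2.symm)
    rw [← Finset.normalize_gcd]
    exact normalize_eq_one.2 hG
  have hbq : b q ≠ 0 := by
    intro h0
    apply hpq
    rw [hb q, h0, mul_zero]
  -- proportionality
  have hprop : ∀ x y y', N x y * b y' = N x y' * b y := by
    intro x y y'
    have := h p x y' y
    rw [hb y, hb y'] at this
    -- g * b y' * N x y = g * b y * N x y'
    have h2 : g * (b y' * N x y) = g * (b y * N x y') := by ring_nf; ring_nf at this; linear_combination this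
    have := mul_left_cancel₀ hg0 h2
    linear_combination this
  have hdvd : ∀ x, b q ∣ N x q := by
    intro x
    have : b q ∣ Finset.univ.gcd (fun y' => N x q * b y') :=
      Finset.dvd_gcd fun y' _ => ⟨N x y', by rw [hprop x q y']; ring⟩
    rw [Finset.gcd_mul_left, hgcdb, mul_one] at this
    exact this.trans (normalize_dvd_iff.2 dvd_rfl)
  choose a ha using hdvd
  refine ⟨a, b, fun x y => ?_⟩
  have := hprop x y q
  rw [ha x] at this
  -- N x y * b q = b q * a x * b y
  have h2 : b q * N x y = b q * (a x * b y) := by linear_combination this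
  exact mul_left_cancel₀ hbq h2
theorem stmt_4 {R : Type*} [CommRing R] [IsDomain R] [UniqueFactorizationMonoid R]
    {n : ℕ} (hn : 1 ≤ n)
    (Φ : Matrix (Fin n) (Fin n) R ≃ₗ[R] Matrix (Fin n) (Fin n) R) :
    (∃ A B : Matrix (Fin n) (Fin n) R, ∀ X, Φ X = A * X * B) ↔
    (∀ i i' k k' j j' l l' : Fin n,
      Φ (Matrix.single j l 1) i k * Φ (Matrix.single j' l' 1) i' k' =
      Φ (Matrix.single j l' 1) i k' * Φ (Matrix.single j' l 1) i' k) := by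
  have key : ∀ (A B : Matrix (Fin n) (Fin n) R) (j l i k : Fin n),
      (A * Matrix.single j l 1 * B : Matrix (Fin n) (Fin n) R) i k = A i j * B l k := by
    intro A B j l i k
    rw [Matrix.mul_assoc, Matrix.mul_apply]
    simp [Matrix.single, Matrix.mul_apply, Finset.mul_sum, ite_and]
  constructor
  · rintro ⟨A, B, hAB⟩ i i' k k' j j' l l'
    simp only [hAB, key]
    ring
  · intro hmin
    obtain ⟨a, b, hab⟩ := rank_one_factor
      (fun (x y : Fin n × Fin n) => Φ (Matrix.single x.2 y.2 1) x.1 y.1)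
      (fun x x' y y' => hmin x.1 x'.1 y.1 y'.1 x.2 x'.2 y.2 y'.2)
    refine ⟨Matrix.of (fun i j => a (i, j)), Matrix.of (fun l k => b (k, l)), fun X => ?_⟩
    have hX : X = ∑ j : Fin n, ∑ l : Fin n, X j l • Matrix.single j l (1 : R) := by
      conv_lhs => rw [Matrix.matrix_eq_sum_single X]
      refine Finset.sum_congr rfl fun j _ => Finset.sum_congr rfl fun l _ => ?_
      rw [Matrix.smul_single, smul_eq_mul, mul_one]
    have hL : Φ X = ∑ j : Fin n, ∑ l : Fin n, X j l • Φ (Matrix.single j l (1 : R)) := by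
      conv_lhs => rw [hX]
      simp only [map_sum, LinearEquiv.map_smul]
    ext i k
    rw [hL]
    conv_rhs => rw [hX]
    simp only [Matrix.mul_sum, Matrix.sum_mul, Matrix.mul_smul, Matrix.smul_mul,
      Matrix.sum_apply, Matrix.smul_apply, key, smul_eq_mul, Matrix.of_apply]
    refine Finset.sum_congr rfl fun j _ => Finset.sum_congr rfl fun l _ => ?_
    rw [hab (i, j) (k, l)]
end

section
/- Let R be a commutative ring which is an integral domain and a unique factorization domain, let n ≥ 1, and let Φ : Matrix (Fin n) (Fin n) R ≃ₗ[R] Matrix (Fin n) (Fin n) R be an R-linear automorphism. Then there exists A : Matrix (Fin n) (Fin n) R with IsUnit (det A) and Φ X = A * X * A⁻¹ for every X if and only if the following three conditions hold: (a) for all i, i', k, k', j, j', l, l' ∈ Fin n, Φ(E j l) i k * Φ(E j' l') i' k' = Φ(E j l') i k' * Φ(E j' l) i' k; (b) Φ 1 = 1; (c) trace(Φ X) = trace X for every X. -/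
open Matrix Finset in
private lemma rank_one_factor' {R : Type*} [CommRing R] [IsDomain R] [UniqueFactorizationMonoid R]
    {ι κ : Type*} [Fintype ι]
    (M : ι → κ → R) (hM : ∀ s s' t t', M s t * M s' t' = M s t' * M s' t)
    (s0 : ι) (t0 : κ) (h0 : M s0 t0 ≠ 0) :
    ∃ (u : ι → R) (v : κ → R), ∀ s t, M s t = u s * v t := by
  letI : StrongNormalizationMonoid R := UniqueFactorizationMonoid.strongNormalizationMonoid
  letI : StrongNormalizedGCDMonoid R := UniqueFactorizationMonoid.toStrongNormalizedGCDMonoid R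
  set g : R := Finset.univ.gcd (fun s => M s t0) with hgdef
  obtain ⟨u, hu, hu1⟩ := Finset.extract_gcd (fun s => M s t0)
    (⟨s0, Finset.mem_univ s0⟩ : (Finset.univ : Finset ι).Nonempty)
  have hu' : ∀ s, M s t0 = g * u s := fun s => hu s (Finset.mem_univ s)
  have hgne : g ≠ 0 := by
    intro h; apply h0; rw [hu' s0, h, zero_mul]
  have hus0 : u s0 ≠ 0 := by
    intro h; apply h0; rw [hu' s0, h, mul_zero]
  have key : ∀ s s' t, M s t * u s' = u s * M s' t := by
    intro s s' t
    have := hM s s' t t0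
    rw [hu' s', hu' s] at this
    apply mul_left_cancel₀ hgne
    ring_nf
    ring_nf at this
    linear_combination this
  have hdvd : ∀ t, u s0 ∣ M s0 t := by
    intro t
    have h1 : u s0 ∣ Finset.univ.gcd (fun s => u s * M s0 t) := by
      apply Finset.dvd_gcd
      intro s _
      exact ⟨M s t, by rw [← key s s0 t]; ring⟩
    rwa [Finset.gcd_mul_right, hu1, one_mul, dvd_normalize_iff] at h1
  choose v hv using hdvd
  refine ⟨u, v, fun s t => ?_⟩
  apply mul_right_cancel₀ hus0
  rw [key s s0 t, hv t]
  ring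

open Matrix Finset in
private lemma mul_std_mul' {R : Type*} [CommRing R] {n : ℕ}
    (A B : Matrix (Fin n) (Fin n) R) (j l i k : Fin n) :
    (A * (single j l 1 : Matrix (Fin n) (Fin n) R) * B) i k = A i j * B l k := by
  simp [Matrix.mul_apply, Matrix.single, mul_ite, ite_mul, Finset.sum_ite_eq,
    Finset.sum_ite_eq', Matrix.of_apply, ite_and]

open Matrix Finset in
private lemma matrix_sum_smul' {R : Type*} [CommRing R] {n : ℕ}
    (X : Matrix (Fin n) (Fin n) R) :
    X = ∑ j, ∑ l, X j l • (single j l (1:R) : Matrix (Fin n) (Fin n) R) := by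
  conv_lhs => rw [matrix_eq_sum_single X]
  refine Finset.sum_congr rfl fun j _ => Finset.sum_congr rfl fun l _ => ?_
  rw [smul_single, smul_eq_mul, mul_one]

theorem stmt_5 {R : Type*} [CommRing R] [IsDomain R] [UniqueFactorizationMonoid R]
    {n : ℕ} (hn : 1 ≤ n)
    (Φ : Matrix (Fin n) (Fin n) R ≃ₗ[R] Matrix (Fin n) (Fin n) R) :
    (∃ A : Matrix (Fin n) (Fin n) R, IsUnit A.det ∧ ∀ X, Φ X = A * X * A⁻¹) ↔
    ((∀ i i' k k' j j' l l' : Fin n,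
        Φ (Matrix.single j l 1) i k * Φ (Matrix.single j' l' 1) i' k' =
        Φ (Matrix.single j l' 1) i k' * Φ (Matrix.single j' l 1) i' k) ∧
      Φ 1 = 1 ∧
      ∀ X : Matrix (Fin n) (Fin n) R, (Φ X).trace = X.trace) := by
  constructor
  · rintro ⟨A, hA, hΦ⟩
    refine ⟨fun i i' k k' j j' l l' => ?_, ?_, fun X => ?_⟩
    · rw [hΦ, hΦ, hΦ, hΦ, mul_std_mul', mul_std_mul', mul_std_mul', mul_std_mul']
      ring
    · rw [hΦ, mul_one, Matrix.mul_nonsing_inv A hA]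
    · rw [hΦ, Matrix.trace_mul_cycle, Matrix.nonsing_inv_mul A hA, one_mul]
  · rintro ⟨ha, hb, -⟩
    set M : (Fin n × Fin n) → (Fin n × Fin n) → R :=
      fun s t => Φ (Matrix.single s.2 t.2 1) s.1 t.1 with hMdef
    have hM : ∀ s s' t t', M s t * M s' t' = M s t' * M s' t :=
      fun s s' t t' => ha s.1 s'.1 t.1 t'.1 s.2 s'.2 t.2 t'.2
    set z : Fin n := ⟨0, hn⟩ with hz
    have hEz : Φ (Matrix.single z z (1:R)) ≠ 0 := by
      intro h
      have h2 : Matrix.single z z (1:R) = 0 := by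
        apply Φ.injective
        rw [h, map_zero]
      have := congrFun (congrFun h2 z) z
      simp [Matrix.single] at this
    obtain ⟨i, k, hik⟩ : ∃ i k, Φ (Matrix.single z z (1:R)) i k ≠ 0 := by
      by_contra h
      push_neg at h
      exact hEz (by ext i k; exact h i k)
    obtain ⟨u, v, huv⟩ := rank_one_factor' M hM (i, z) (k, z) hik
    set A : Matrix (Fin n) (Fin n) R := Matrix.of fun i j => u (i, j) with hAdef
    set B : Matrix (Fin n) (Fin n) R := Matrix.of fun l k => v (k, l) with hBdef
    have hE : ∀ j l i k, Φ (Matrix.single j l (1:R)) i k = A i j * B l k :=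
      fun j l i k => huv (i, j) (k, l)
    have hfull : ∀ X, Φ X = A * X * B := by
      intro X
      have step : Φ X = ∑ j, ∑ l, X j l • Φ (Matrix.single j l (1:R)) := by
        conv_lhs => rw [matrix_sum_smul' X]
        simp only [map_sum, map_smul]
      ext p q
      rw [step]
      simp only [Matrix.sum_apply, Matrix.smul_apply, hE, smul_eq_mul, Matrix.mul_apply,
        Finset.sum_mul, Finset.mul_sum]
      rw [Finset.sum_comm]
      refine Finset.sum_congr rfl fun x _ => Finset.sum_congr rfl fun y _ => ?_
      ring
    have hAB : A * B = 1 := by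
      have h1 := hfull 1
      rw [hb, mul_one] at h1
      exact h1.symm
    refine ⟨A, IsUnit.of_mul_eq_one B.det (by rw [← Matrix.det_mul, hAB, Matrix.det_one]),
      fun X => ?_⟩
    rw [hfull X, Matrix.inv_eq_right_inv hAB]
end

section
/- Let R be a discrete valuation ring with uniformizer π and field of fractions K, let n ≥ 1, and let A, B : Matrix (Fin n) (Fin n) K. Suppose that for every X ∈ ParEnd_n(R) there exists Y ∈ ParEnd_n(R) with A * ι X * B = ι Y, and that the resulting R-linear map ParEnd_n(R) → ParEnd_n(R) is bijective. Then there exist A', B' : Matrix (Fin n) (Fin n) R such that for every X : Matrix (Fin n) (Fin n) K, (algebraMap R K π) • (A * X * B) = ι A' * X * ι B'. -/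
open Matrix

lemma tri_entry {K : Type*} [CommRing K] {n : ℕ} (A B : Matrix (Fin n) (Fin n) K)
    (k l i j : Fin n) (c : K) :
    (A * Matrix.single k l c * B) i j = A i k * c * B l j := by
  rw [Matrix.mul_apply, Finset.sum_eq_single l]
  · simp
  · intro q _ hq; simp [hq]
  · simp

lemma map_std {R K : Type*} [CommRing R] [CommRing K] (f : R →+* K) {n : ℕ}
    (k l : Fin n) (c : R) :
    (Matrix.single k l c).map f = Matrix.single k l (f c) := by
  ext i j
  simp [Matrix.single, Matrix.map_apply, apply_ite f]

lemma smul_mul3 {K : Type*} [CommRing K] {n : ℕ} (c1 c2 : K)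
    (M X N : Matrix (Fin n) (Fin n) K) :
    (c1 • M) * X * (c2 • N) = (c1 * c2) • (M * X * N) := by
  rw [Matrix.smul_mul, Matrix.smul_mul, Matrix.mul_smul, smul_smul]

theorem stmt_6 {R K : Type*} [CommRing R] [IsDomain R] [IsDiscreteValuationRing R]
    [Field K] [Algebra R K] [IsFractionRing R K]
    (π : R) (hπ : Irreducible π)
    {n : ℕ} (hn : 1 ≤ n)
    (ParEnd : Set (Matrix (Fin n) (Fin n) R))
    (hPE : ParEnd = {M | ∀ i j : Fin n, (j : ℕ) < (i : ℕ) → π ∣ M i j})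
    (A B : Matrix (Fin n) (Fin n) K)
    (hmap : ∀ X ∈ ParEnd, ∃ Y ∈ ParEnd,
        A * X.map (algebraMap R K) * B = Y.map (algebraMap R K))
    (hsurj : ∀ Y ∈ ParEnd, ∃ X ∈ ParEnd,
        A * X.map (algebraMap R K) * B = Y.map (algebraMap R K))
    (hinj : ∀ X ∈ ParEnd, ∀ X' ∈ ParEnd,
        A * X.map (algebraMap R K) * B = A * X'.map (algebraMap R K) * B → X = X') :
    ∃ A' B' : Matrix (Fin n) (Fin n) R,
      ∀ X : Matrix (Fin n) (Fin n) K,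
        algebraMap R K π • (A * X * B) =
          A'.map (algebraMap R K) * X * B'.map (algebraMap R K) := by
  classical
  set ι := algebraMap R K with hι
  have ιinj : Function.Injective ι := IsFractionRing.injective R K
  by_cases hB : B = 0
  · refine ⟨0, 0, fun X => ?_⟩
    simp [hB]
  -- clear denominators
  obtain ⟨e, hAe⟩ := IsLocalization.exist_integer_multiples_of_finite
    (nonZeroDivisors R) (fun p : Fin n × Fin n => A p.1 p.2)
  obtain ⟨d, hBd⟩ := IsLocalization.exist_integer_multiples_of_finite
    (nonZeroDivisors R) (fun p : Fin n × Fin n => B p.1 p.2)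
  have he0 : (e : R) ≠ 0 := nonZeroDivisors.coe_ne_zero e
  have hd0 : (d : R) ≠ 0 := nonZeroDivisors.coe_ne_zero d
  have hA0' : ∀ i k : Fin n, ∃ r : R, ι r = ι e * A i k := by
    intro i k
    obtain ⟨r, hr⟩ := hAe (i, k)
    exact ⟨r, by rw [hr, Algebra.smul_def]⟩
  have hB0' : ∀ l j : Fin n, ∃ r : R, ι r = ι d * B l j := by
    intro l j
    obtain ⟨r, hr⟩ := hBd (l, j)
    exact ⟨r, by rw [hr, Algebra.smul_def]⟩
  choose A₀ hA₀ using hA0'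
  choose B₀ hB₀ using hB0'
  -- the key divisibility fact
  have key : ∀ i k l j : Fin n, ∃ y : R, π * A₀ i k * B₀ l j = (e : R) * d * y := by
    intro i k l j
    have hXmem : Matrix.single k l π ∈ ParEnd := by
      rw [hPE]
      intro i' j' _
      simp only [Matrix.single, Matrix.of_apply]
      split <;> simp
    obtain ⟨Y, _, hY⟩ := hmap _ hXmem
    have hentry : A i k * ι π * B l j = ι (Y i j) := by
      have := congrFun (congrFun hY i) j
      rwa [map_std, tri_entry, Matrix.map_apply] at this
    refine ⟨Y i j, ιinj ?_⟩
    simp only [_root_.map_mul]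
    calc ι π * ι (A₀ i k) * ι (B₀ l j)
        = (ι e * ι d) * (A i k * ι π * B l j) := by rw [hA₀, hB₀]; ring
      _ = ι e * ι d * ι (Y i j) := by rw [hentry]
  choose F hF using key
  -- pick an entry of B₀ of minimal valuation
  obtain ⟨p, _, hpmin⟩ := Finset.exists_min_image (Finset.univ : Finset (Fin n × Fin n))
    (fun p => IsDiscreteValuationRing.addVal R (B₀ p.1 p.2))
    ⟨(⟨0, hn⟩, ⟨0, hn⟩), Finset.mem_univ _⟩
  set b : R := B₀ p.1 p.2 with hb
  have hex : ∃ l j, B l j ≠ 0 := by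
    by_contra h
    push_neg at h
    exact hB (by ext l j; simpa using h l j)
  obtain ⟨l1, j1, hBlj⟩ := hex
  have hB₀lj : B₀ l1 j1 ≠ 0 := by
    intro h
    apply hBlj
    have := hB₀ l1 j1
    rw [h, map_zero] at this
    rcases mul_eq_zero.mp this.symm with h' | h'
    · exact absurd (ιinj (by simpa using h')) hd0
    · exact h'
  have hb0 : b ≠ 0 := by
    intro h
    apply hB₀lj
    rw [← IsDiscreteValuationRing.addVal_eq_top_iff]
    have h' := hpmin (l1, j1) (Finset.mem_univ _)
    rw [h, IsDiscreteValuationRing.addVal_zero, top_le_iff] at h'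
    exact h'
  have hbdvd : ∀ l j : Fin n, ∃ r : R, B₀ l j = b * r := by
    intro l j
    exact IsDiscreteValuationRing.addVal_le_iff_dvd.mp (hpmin (l, j) (Finset.mem_univ _))
  choose B' hB' using hbdvd
  refine ⟨Matrix.of (fun i k => F i k p.1 p.2), Matrix.of (fun l j => B' l j), fun X => ?_⟩
  -- scalar facts in K
  have hcne : ι ((e : R) * d * b) ≠ 0 := by
    rw [map_ne_zero_iff ι ιinj]
    exact mul_ne_zero (mul_ne_zero he0 hd0) hb0
  apply smul_right_injective (Matrix (Fin n) (Fin n) K) hcne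
  have h1 : (ι e * ι d) • (Matrix.of (fun i k => F i k p.1 p.2)).map ι
      = (ι π * ι b * ι e) • A := by
    ext i k
    have hf : ι π * ι (A₀ i k) * ι b = ι e * ι d * ι (F i k p.1 p.2) := by
      have := congrArg ι (hF i k p.1 p.2)
      simp only [_root_.map_mul] at this
      linear_combination this
    have ha := hA₀ i k
    simp only [Matrix.smul_apply, Matrix.map_apply, Matrix.of_apply, smul_eq_mul]
    linear_combination ι π * ι b * ha - hf
  have h2 : ι b • (Matrix.of (fun l j => B' l j)).map ι = ι d • B := by
    ext l j
    have hf : ι (B₀ l j) = ι b * ι (B' l j) := by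
      have := congrArg ι (hB' l j)
      simp only [_root_.map_mul] at this
      linear_combination this
    have hbb := hB₀ l j
    simp only [Matrix.smul_apply, Matrix.map_apply, Matrix.of_apply, smul_eq_mul]
    linear_combination hbb - hf
  calc ι ((e : R) * d * b) • (ι π • (A * X * B))
      = (ι π * ι b * ι e * ι d) • (A * X * B) := by
        rw [smul_smul, _root_.map_mul, _root_.map_mul]; congr 1; ring
    _ = ((ι π * ι b * ι e) • A) * X * (ι d • B) := (smul_mul3 _ _ _ _ _).symm
    _ = ((ι e * ι d) • (Matrix.of (fun i k => F i k p.1 p.2)).map ι) * X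
          * (ι b • (Matrix.of (fun l j => B' l j)).map ι) := by rw [h1, h2]
    _ = ((ι e * ι d) * ι b) • ((Matrix.of (fun i k => F i k p.1 p.2)).map ι * X
          * (Matrix.of (fun l j => B' l j)).map ι) := smul_mul3 _ _ _ _ _
    _ = ι ((e : R) * d * b) • ((Matrix.of (fun i k => F i k p.1 p.2)).map ι * X
          * (Matrix.of (fun l j => B' l j)).map ι) := by rw [_root_.map_mul, _root_.map_mul]
end

section
/- Let R be a discrete valuation ring with uniformizer π and field of fractions K, let n ≥ 1, and let A : Matrix (Fin n) (Fin n) K be invertible (IsUnit (det A)). Suppose that for every X ∈ ParEnd_n(R) there exists Y ∈ ParEnd_n(R) with A * ι X * A⁻¹ = ι Y, and that the induced R-linear endomorphism of ParEnd_n(R) is bijective. Then there exist nonzero matrices A', B' : Matrix (Fin n) (Fin n) R with A' * B' = π • 1 and B' * A' = π • 1, such that (algebraMap R K π) • (A * X * A⁻¹) = ι A' * X * ι B' for every X : Matrix (Fin n) (Fin n) K. -/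
private lemma dvr_unit_of_not_dvd {R : Type*} [CommRing R] [IsDomain R]
    [IsDiscreteValuationRing R] {π x : R} (hπ : Irreducible π) (h : ¬ π ∣ x) : IsUnit x := by
  by_contra hx
  exact h (Ideal.mem_span_singleton.mp
    (((IsDiscreteValuationRing.irreducible_iff_uniformizer π).mp hπ) ▸
      (IsLocalRing.mem_maximalIdeal x).mpr hx))

private lemma descent7 {R K : Type*} [CommRing R] [IsDomain R] [IsDiscreteValuationRing R]
    [Field K] [Algebra R K] [IsFractionRing R K]
    {π : R} (hπ : Irreducible π) {n : ℕ}
    (A : Matrix (Fin n) (Fin n) K) (p₀ : Fin n × Fin n) :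
    ∀ N : ℕ, ∀ (C : Matrix (Fin n) (Fin n) R) (c : K), c ≠ 0 →
      C.map (algebraMap R K) = c • A → ¬ (π ^ N ∣ C p₀.1 p₀.2) →
      ∃ (C' : Matrix (Fin n) (Fin n) R) (c' : K), c' ≠ 0 ∧
        C'.map (algebraMap R K) = c' • A ∧ ∃ i j, IsUnit (C' i j) := by
  have hπK : algebraMap R K π ≠ 0 := fun h =>
    hπ.ne_zero ((map_eq_zero_iff _ (IsFractionRing.injective R K)).mp h)
  intro N
  induction N with
  | zero => intro C c _ _ hdvd; exact absurd (by simpa using (one_dvd (C p₀.1 p₀.2))) hdvd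
  | succ N ih =>
    intro C c hc hC hdvd
    by_cases hall : ∀ i j, π ∣ C i j
    · choose D hD using hall
      have hDmap : (Matrix.of D).map (algebraMap R K) = (c / algebraMap R K π) • A := by
        ext i j
        have h1 : algebraMap R K (C i j) = c * A i j := by
          have := congrFun (congrFun hC i) j
          simpa [Matrix.map_apply, Matrix.smul_apply, smul_eq_mul] using this
        have h2 : algebraMap R K π * algebraMap R K (D i j) = c * A i j := by
          rw [← map_mul, ← hD i j]; exact h1
        simp only [Matrix.map_apply, Matrix.smul_apply, smul_eq_mul, Matrix.of_apply]
        field_simp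
        linear_combination h2
      refine ih (Matrix.of D) (c / algebraMap R K π) ?_ hDmap ?_
      · exact div_ne_zero hc hπK
      · intro hd
        apply hdvd
        rw [hD p₀.1 p₀.2, pow_succ, mul_comm (π ^ N) π]
        exact mul_dvd_mul_left π hd
    · push_neg at hall
      obtain ⟨i, j, hij⟩ := hall
      exact ⟨C, c, hc, hC, i, j, dvr_unit_of_not_dvd hπ hij⟩

theorem stmt_7 {R K : Type*} [CommRing R] [IsDomain R] [IsDiscreteValuationRing R]
    [Field K] [Algebra R K] [IsFractionRing R K]
    (π : R) (hπ : Irreducible π)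
    {n : ℕ} (hn : 1 ≤ n)
    (ParEnd : Set (Matrix (Fin n) (Fin n) R))
    (hPE : ParEnd = {M | ∀ i j : Fin n, (j : ℕ) < (i : ℕ) → π ∣ M i j})
    (A : Matrix (Fin n) (Fin n) K) (hA : IsUnit A.det)
    (hmap : ∀ X ∈ ParEnd, ∃ Y ∈ ParEnd,
        A * X.map (algebraMap R K) * A⁻¹ = Y.map (algebraMap R K))
    (hsurj : ∀ Y ∈ ParEnd, ∃ X ∈ ParEnd,
        A * X.map (algebraMap R K) * A⁻¹ = Y.map (algebraMap R K))
    (hinj : ∀ X ∈ ParEnd, ∀ X' ∈ ParEnd,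
        A * X.map (algebraMap R K) * A⁻¹ = A * X'.map (algebraMap R K) * A⁻¹ → X = X') :
    ∃ A' B' : Matrix (Fin n) (Fin n) R, A' ≠ 0 ∧ B' ≠ 0 ∧
      A' * B' = π • (1 : Matrix (Fin n) (Fin n) R) ∧
      B' * A' = π • (1 : Matrix (Fin n) (Fin n) R) ∧
      ∀ X : Matrix (Fin n) (Fin n) K,
        algebraMap R K π • (A * X * A⁻¹) =
          A'.map (algebraMap R K) * X * B'.map (algebraMap R K) := by
  have hinjK : Function.Injective (algebraMap R K) := IsFractionRing.injective R K
  have hπ0 : π ≠ 0 := hπ.ne_zero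
  have hπK : algebraMap R K π ≠ 0 := fun h => hπ0 ((map_eq_zero_iff _ hinjK).mp h)
  have hdetA : A.det ≠ 0 := hA.ne_zero
  haveI : Nonempty (Fin n) := ⟨⟨0, hn⟩⟩
  -- find a nonzero entry of A
  have hAne : ∃ p : Fin n × Fin n, A p.1 p.2 ≠ 0 := by
    by_contra h
    push_neg at h
    have : A = 0 := by ext i j; exact h ⟨i, j⟩
    rw [this, Matrix.det_zero] at hdetA
    exact hdetA rfl
  obtain ⟨p₀, hp₀⟩ := hAne
  -- clear denominators
  obtain ⟨b, hb⟩ := IsLocalization.exist_integer_multiples (nonZeroDivisors R)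
    (Finset.univ : Finset (Fin n × Fin n)) (fun p => A p.1 p.2)
  choose C0 hC0 using fun p : Fin n × Fin n => hb p (Finset.mem_univ p)
  have hbne : algebraMap R K (b : R) ≠ 0 := fun h =>
    nonZeroDivisors.coe_ne_zero b (hinjK (by rw [h, map_zero]))
  have hC0map : (Matrix.of fun i j => C0 (i, j)).map (algebraMap R K)
      = (algebraMap R K (b : R)) • A := by
    ext i j
    have := hC0 (i, j)
    simpa [Matrix.map_apply, Matrix.smul_apply, Algebra.smul_def] using this
  -- make it primitive
  have hC0p₀ : C0 p₀ ≠ 0 := by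
    intro h
    apply hp₀
    have := hC0 p₀
    rw [h, map_zero, Algebra.smul_def] at this
    exact (mul_eq_zero.mp this.symm).resolve_left hbne
  obtain ⟨N, u, hNu⟩ := IsDiscreteValuationRing.eq_unit_mul_pow_irreducible hC0p₀ hπ
  have hNdvd : ¬ (π ^ (N + 1) ∣ (Matrix.of fun i j => C0 (i, j)) p₀.1 p₀.2) := by
    simp only [Matrix.of_apply, Prod.mk.eta]
    rw [hNu]
    intro ⟨t, ht⟩
    rw [pow_succ] at ht
    have : (u : R) = π * t := by
      apply mul_right_cancel₀ (pow_ne_zero N hπ0)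
      rw [ht]; ring
    exact hπ.not_isUnit (isUnit_of_dvd_unit ⟨t, this⟩ u.isUnit)
  obtain ⟨C', c', hc', hC', i₀, j₀, hu⟩ :=
    descent7 hπ A p₀ (N + 1) (Matrix.of fun i j => C0 (i, j)) (algebraMap R K (b : R))
      hbne hC0map hNdvd
  set ι : Matrix (Fin n) (Fin n) R → Matrix (Fin n) (Fin n) K :=
    fun M => M.map (algebraMap R K) with hι
  -- invertibility of ι C'
  have hdetC : (ι C').det ≠ 0 := by
    show (C'.map (algebraMap R K)).det ≠ 0
    rw [hC', Matrix.det_smul]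
    exact mul_ne_zero (pow_ne_zero _ hc') hdetA
  have hCmul : ι C' * (ι C')⁻¹ = 1 := Matrix.mul_nonsing_inv _ (Ne.isUnit hdetC)
  have hCmul' : (ι C')⁻¹ * ι C' = 1 := Matrix.nonsing_inv_mul _ (Ne.isUnit hdetC)
  have hAinv : A⁻¹ = c' • (ι C')⁻¹ := by
    apply Matrix.inv_eq_right_inv
    calc A * (c' • (ι C')⁻¹) = (c' • A) * (ι C')⁻¹ := by
          rw [Matrix.mul_smul, Matrix.smul_mul]
      _ = 1 := by rw [← hC']; exact hCmul
  have huK : algebraMap R K (C' i₀ j₀) ≠ 0 := fun h =>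
    hu.ne_zero (hinjK (by rw [h, map_zero]))
  have hentry : algebraMap R K (C' i₀ j₀) = c' * A i₀ j₀ := by
    have := congrFun (congrFun hC' i₀) j₀
    simpa [Matrix.map_apply, Matrix.smul_apply, smul_eq_mul] using this
  -- key divisibility
  have key : ∀ j l : Fin n, ∃ d : R,
      algebraMap R K d = algebraMap R K π * ((ι C')⁻¹ j l) := by
    intro j l
    have hXmem : (π • Matrix.single j₀ j (1 : R)) ∈ ParEnd := by
      rw [hPE]
      intro i' j' _
      exact Dvd.intro _ rfl
    obtain ⟨Y, _, hY⟩ := hmap _ hXmem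
    have hXmap : (π • Matrix.single j₀ j (1 : R)).map (algebraMap R K)
        = algebraMap R K π • Matrix.single j₀ j (1 : K) := by
      ext i' j'
      simp [Matrix.map_apply, Matrix.smul_apply, Matrix.single, smul_eq_mul,
        apply_ite (algebraMap R K)]
    have hYe : algebraMap R K (Y i₀ l)
        = algebraMap R K π * (A i₀ j₀ * A⁻¹ j l) := by
      have h3 := congrFun (congrFun hY i₀) l
      rw [hXmap] at h3
      have h4 : (A * (algebraMap R K π • Matrix.single j₀ j (1 : K)) * A⁻¹) i₀ l
          = algebraMap R K π * ((A * Matrix.single j₀ j (1 : K) * A⁻¹) i₀ l) := by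
        rw [Matrix.mul_smul, Matrix.smul_mul, Matrix.smul_apply, smul_eq_mul]
      have h5 : (A * Matrix.single j₀ j (1 : K) * A⁻¹) i₀ l
          = A i₀ j₀ * A⁻¹ j l := by
        rw [Matrix.mul_apply]
        rw [Finset.sum_eq_single j]
        · rw [Matrix.mul_single_apply_same, mul_one]
        · intro m _ hm
          rw [Matrix.mul_single_apply_of_ne 1 j₀ j i₀ m hm, zero_mul]
        · intro hx; exact absurd (Finset.mem_univ j) hx
      rw [h4, h5] at h3
      simpa [Matrix.map_apply] using h3.symm
    refine ⟨(hu.unit⁻¹ : Rˣ) * Y i₀ l, ?_⟩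
    have hcanc : algebraMap R K ((hu.unit⁻¹ : Rˣ) : R) * algebraMap R K (C' i₀ j₀) = 1 := by
      rw [← map_mul]
      have : ((hu.unit⁻¹ : Rˣ) : R) * C' i₀ j₀ = 1 := by
        have := hu.unit.inv_mul
        simpa using this
      rw [this, map_one]
    have hAjl : A⁻¹ j l = c' * (ι C')⁻¹ j l := by
      rw [hAinv, Matrix.smul_apply, smul_eq_mul]
    calc algebraMap R K ((hu.unit⁻¹ : Rˣ) * Y i₀ l)
        = algebraMap R K ((hu.unit⁻¹ : Rˣ) : R)
          * (algebraMap R K π * (A i₀ j₀ * (c' * (ι C')⁻¹ j l))) := by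
          rw [map_mul, hYe, hAjl]
      _ = (algebraMap R K ((hu.unit⁻¹ : Rˣ) : R) * (c' * A i₀ j₀))
          * (algebraMap R K π * (ι C')⁻¹ j l) := by ring
      _ = algebraMap R K π * (ι C')⁻¹ j l := by
          rw [← hentry, hcanc, one_mul]
  choose B'f hB'f using fun j : Fin n => fun l : Fin n => key j l
  set B' : Matrix (Fin n) (Fin n) R := Matrix.of B'f with hB'def
  have hB' : ι B' = algebraMap R K π • (ι C')⁻¹ := by
    ext j l
    rw [hι]
    simpa [hι, hB'def, Matrix.map_apply, Matrix.smul_apply, smul_eq_mul] using hB'f j l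
  have hιinj : Function.Injective ι := Matrix.map_injective hinjK
  have hπ1 : ι (π • (1 : Matrix (Fin n) (Fin n) R))
      = algebraMap R K π • (1 : Matrix (Fin n) (Fin n) K) := by
    ext i j
    simp [hι, Matrix.map_apply, Matrix.smul_apply, Matrix.one_apply, smul_eq_mul,
      apply_ite (algebraMap R K)]
  refine ⟨C', B', ?_, ?_, ?_, ?_, ?_⟩
  · intro h
    exact hu.ne_zero (by rw [h]; rfl)
  · intro h
    have h2 : ι B' = 0 := by rw [h]; ext i j; simp [hι]
    rw [h2] at hB'
    have := congrFun (congrFun hB'.symm j₀) j₀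
    simp only [Matrix.smul_apply, Matrix.zero_apply, smul_eq_mul] at this
    have h3 : (ι C')⁻¹ j₀ j₀ = 0 := by
      rcases mul_eq_zero.mp this with h' | h'
      · exact absurd h' hπK
      · exact h'
    have h4 := congrFun (congrFun hCmul' j₀) j₀
    rw [Matrix.mul_apply] at h4
    -- derive contradiction differently: (ι C')⁻¹ invertible so nonzero row, but easier:
    -- multiply hB' relation: ι B' = 0 means π • (ι C')⁻¹ = 0, so (ι C')⁻¹ = 0
    have h5 : (ι C')⁻¹ = 0 := by
      ext i j
      have := congrFun (congrFun hB'.symm i) j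
      simp only [Matrix.smul_apply, Matrix.zero_apply, smul_eq_mul] at this
      rcases mul_eq_zero.mp this with h' | h'
      · exact absurd h' hπK
      · exact h'
    rw [h5, Matrix.mul_zero] at hCmul
    have h6 := congrFun (congrFun hCmul j₀) j₀
    simp [Matrix.zero_apply, Matrix.one_apply] at h6
  · apply hιinj
    show (C' * B').map (algebraMap R K) = _
    rw [Matrix.map_mul]
    show ι C' * ι B' = ι (π • 1)
    rw [hB', hπ1, Matrix.mul_smul, hCmul]
  · apply hιinj
    show (B' * C').map (algebraMap R K) = _
    rw [Matrix.map_mul]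
    show ι B' * ι C' = ι (π • 1)
    rw [hB', hπ1, Matrix.smul_mul, hCmul']
  · intro X
    have hCinv : (ι C')⁻¹ = c'⁻¹ • A⁻¹ := by
      rw [hAinv, smul_smul, inv_mul_cancel₀ hc', one_smul]
    have hB2 : B'.map (algebraMap R K) = algebraMap R K π • (ι C')⁻¹ := hB'
    rw [hC', hB2, hCinv, smul_smul]
    rw [Matrix.smul_mul, Matrix.smul_mul, Matrix.mul_smul, smul_smul]
    congr 1
    field_simp
end

section
/- Let K be a field, n ≥ 1, and A, B, A', B' : Matrix (Fin n) (Fin n) K. Suppose A * X * B = A' * X * B' for every X : Matrix (Fin n) (Fin n) K, and that there exists X₀ with A * X₀ * B ≠ 0. Then there exists ρ ∈ K with ρ ≠ 0 such that A' = ρ • A and B' = ρ⁻¹ • B. -/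
/-!
Testing the identity on the matrix units `X = Eᵢⱼ` gives `A k i * B j l = A' k i * B' j l` for
all indices: the pure tensors `A ⊗ B` and `A' ⊗ B'` coincide, and `A ⊗ B ≠ 0` because some
`A * X₀ * B` is nonzero. Fixing one nonzero entry `A k₀ i₀ * B j₀ l₀` and dividing by it then
exhibits `A'` and `B'` as rescalings of `A` and `B` by mutually inverse factors.
-/

theorem exists_smul_eq_of_mul_eq_mul {α β K : Type*} [Field K] {f f' : α → K} {g g' : β → K}
    (h : ∀ a b, f a * g b = f' a * g' b) (hne : ∃ a b, f a * g b ≠ 0) :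
    ∃ ρ : K, ρ ≠ 0 ∧ f' = ρ • f ∧ g' = ρ⁻¹ • g := by
  obtain ⟨a₀, b₀, h₀⟩ := hne
  have hfg' : f' a₀ * g' b₀ ≠ 0 := h a₀ b₀ ▸ h₀
  have hf : f a₀ ≠ 0 := left_ne_zero_of_mul h₀
  have hg : g b₀ ≠ 0 := right_ne_zero_of_mul h₀
  have hf' : f' a₀ ≠ 0 := left_ne_zero_of_mul hfg'
  have hg' : g' b₀ ≠ 0 := right_ne_zero_of_mul hfg'
  refine ⟨g b₀ / g' b₀, div_ne_zero hg hg', funext fun a => ?_, funext fun b => ?_⟩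
  · have := h a b₀
    simp only [Pi.smul_apply, smul_eq_mul]
    field_simp
    linear_combination -this
  · have hb := h a₀ b
    have hb₀ := h a₀ b₀
    rw [Pi.smul_apply, smul_eq_mul, inv_div, div_mul_eq_mul_div, eq_div_iff hg]
    refine mul_left_cancel₀ hf' ?_
    linear_combination g b * hb₀ - g b₀ * hb

namespace Matrix

variable {l m n o α : Type*} [Fintype m] [Fintype n]

theorem mul_single_mul_apply [DecidableEq m] [DecidableEq n] [NonUnitalNonAssocSemiring α]
    (A : Matrix l m α) (B : Matrix n o α) (i : m) (j : n) (c : α) (k : l) (r : o) :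
    (A * single i j c * B) k r = A k i * c * B j r := by
  simp [mul_apply, single, ite_and, ite_mul]

theorem exists_mul_mul_ne_zero_of_mul_mul_ne_zero [CommSemiring α] {A : Matrix l m α}
    {X : Matrix m n α} {B : Matrix n o α} (hX : A * X * B ≠ 0) :
    ∃ k i j r, A k i * B j r ≠ 0 := by
  contrapose! hX
  ext k r
  simp [mul_apply, Finset.sum_mul, mul_right_comm _ (X _ _), hX]

end Matrix

theorem stmt_8_general {K : Type*} [Field K] {n : ℕ}
    (A B A' B' : Matrix (Fin n) (Fin n) K)
    (h : ∀ X : Matrix (Fin n) (Fin n) K, A * X * B = A' * X * B')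
    (hne : ∃ X₀ : Matrix (Fin n) (Fin n) K, A * X₀ * B ≠ 0) :
    ∃ ρ : K, ρ ≠ 0 ∧ A' = ρ • A ∧ B' = ρ⁻¹ • B := by
  have hentries : ∀ k i j r, A k i * B j r = A' k i * B' j r := fun k i j r => by
    simpa [Matrix.mul_single_mul_apply] using congrFun₂ (h (Matrix.single i j 1)) k r
  obtain ⟨X₀, hX₀⟩ := hne
  obtain ⟨k, i, j, r, hkijr⟩ := Matrix.exists_mul_mul_ne_zero_of_mul_mul_ne_zero hX₀
  obtain ⟨ρ, hρ, hA, hB⟩ := exists_smul_eq_of_mul_eq_mul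
    (f := Function.uncurry A) (f' := Function.uncurry A')
    (g := Function.uncurry B) (g' := Function.uncurry B')
    (fun p q => hentries p.1 p.2 q.1 q.2) ⟨(k, i), (j, r), hkijr⟩
  exact ⟨ρ, hρ, funext₂ fun k i => congrFun hA (k, i), funext₂ fun j r => congrFun hB (j, r)⟩

theorem stmt_8 {K : Type*} [Field K] {n : ℕ} (hn : 1 ≤ n)
    (A B A' B' : Matrix (Fin n) (Fin n) K)
    (h : ∀ X : Matrix (Fin n) (Fin n) K, A * X * B = A' * X * B')
    (hne : ∃ X₀ : Matrix (Fin n) (Fin n) K, A * X₀ * B ≠ 0) :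
    ∃ ρ : K, ρ ≠ 0 ∧ A' = ρ • A ∧ B' = ρ⁻¹ • B :=
  stmt_8_general A B A' B' h hne
end

section
/- Let R be a discrete valuation ring with uniformizer π, let n ≥ 1, and let A : Matrix (Fin n) (Fin n) R with IsUnit (det A). Suppose that conjugation by A maps ParEnd_n(R) bijectively onto itself, i.e. for every X : Matrix (Fin n) (Fin n) R one has X ∈ ParEnd_n(R) if and only if A * X * A⁻¹ ∈ ParEnd_n(R). Then A ∈ ParEnd_n(R). -/
lemma mul_std_mul_aux {R : Type*} [CommRing R] {n : ℕ}
    (A B : Matrix (Fin n) (Fin n) R) (p q i l : Fin n) :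
    (A * Matrix.single p q 1 * B : Matrix (Fin n) (Fin n) R) i l = A i p * B q l := by
  rw [Matrix.mul_apply]
  rw [Finset.sum_eq_single q]
  · rw [Matrix.mul_apply, Finset.sum_eq_single p]
    · simp [Matrix.single]
    · intro b _ hb; simp [Matrix.single, hb.symm]
    · simp
  · intro b _ hb
    rw [Matrix.mul_apply, Finset.sum_eq_zero, zero_mul]
    intro c _
    simp [Matrix.single, hb.symm]
  · simp

theorem stmt_9 {R : Type*} [CommRing R] [IsDomain R] [IsDiscreteValuationRing R]
    (π : R) (hπ : Irreducible π)
    {n : ℕ} (hn : 1 ≤ n)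
    (ParEnd : Set (Matrix (Fin n) (Fin n) R))
    (hPE : ParEnd = {M | ∀ i j : Fin n, (j : ℕ) < (i : ℕ) → π ∣ M i j})
    (A : Matrix (Fin n) (Fin n) R) (hA : IsUnit A.det)
    (hconj : ∀ X : Matrix (Fin n) (Fin n) R, X ∈ ParEnd ↔ A * X * A⁻¹ ∈ ParEnd) :
    A ∈ ParEnd := by
  subst hPE
  have hprime : Prime π := hπ.prime
  intro i j hij
  by_contra hnd
  -- key: all entries of A⁻¹ in rows ≥ j and columns < i are divisible by π
  have key : ∀ q l : Fin n, (j : ℕ) ≤ (q : ℕ) → (l : ℕ) < (i : ℕ) → π ∣ A⁻¹ q l := by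
    intro q l hq hl
    have hX : Matrix.single j q (1 : R) ∈
        {M : Matrix (Fin n) (Fin n) R | ∀ i j : Fin n, (j : ℕ) < (i : ℕ) → π ∣ M i j} := by
      intro a b hab
      have : Matrix.single j q (1 : R) a b = 0 := by
        simp only [Matrix.single, Matrix.of_apply]
        rw [if_neg]
        rintro ⟨rfl, rfl⟩
        omega
      rw [this]
      exact dvd_zero π
    have h2 := (hconj _).1 hX i l hl
    rw [mul_std_mul_aux] at h2
    rcases hprime.dvd_mul.mp h2 with h | h
    · exact absurd h hnd
    · exact h
  -- hence π divides det A⁻¹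
  have hdet : π ∣ (A⁻¹).det := by
    rw [Matrix.det_apply']
    apply Finset.dvd_sum
    intro σ _
    obtain ⟨l, hl, hq⟩ : ∃ l : Fin n, (l : ℕ) < (i : ℕ) ∧ (j : ℕ) ≤ ((σ l : Fin n) : ℕ) := by
      by_contra h
      push_neg at h
      have hinj : Function.Injective
          (fun x : Fin (i : ℕ) => (⟨(σ ⟨x, lt_trans x.2 i.2⟩ : Fin n),
            h ⟨x, lt_trans x.2 i.2⟩ x.2⟩ : Fin (j : ℕ))) := by
        intro a b hab
        simp only [Fin.mk.injEq] at hab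
        have := σ.injective (Fin.val_injective hab)
        exact Fin.ext (congrArg (Fin.val : Fin n → ℕ) this)
      have := Fintype.card_le_of_injective _ hinj
      simp only [Fintype.card_fin] at this
      omega
    have h1 : π ∣ ∏ l' : Fin n, A⁻¹ (σ l') l' :=
      (key (σ l) l hq hl).trans (Finset.dvd_prod_of_mem _ (Finset.mem_univ l))
    exact Dvd.dvd.mul_left h1 _
  have hu : IsUnit (A⁻¹).det := A.isUnit_nonsing_inv_det hA
  exact hπ.not_isUnit (isUnit_of_dvd_unit hdet hu)
end

section
/- Let r ≥ 3 be an integer, let d : {j : ℕ // 2 ≤ j ∧ j ≤ r} → ℕ, and set W = Π_{2 ≤ j ≤ r} (Fin (d j) → ℂ). Let f : W → W be a bijection such that both f and its inverse are polynomial maps, and such that for every nonzero c ∈ ℂ and every s ∈ W, f (fun j ↦ c^j • s j) = fun j ↦ c^j • (f s) j. Then: (i) for every j with 2 ≤ j ≤ r, the j-th component of f(s) depends only on (s_2, …, s_j); and (ii) there exist ℂ-linear equivalences A_{r−1} of (Fin (d (r−1)) → ℂ) and A_r of (Fin (d r) → ℂ), and polynomial maps g_{r−1} and g_r defined on Π_{2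 ≤ j ≤ r−2} (Fin (d j) → ℂ), such that for every s ∈ W the (r−1)-component of f(s) equals A_{r−1}(s_{r−1}) + g_{r−1}(s_2,…,s_{r−2}) and the r-component of f(s) equals A_r(s_r) + g_r(s_2,…,s_{r−2}). -/
/-- A map from a product `Π j, (Fin (dσ j) → ℂ)` to a space `τ → ℂ` is a polynomial map
if each of its coordinates is given by evaluation of a multivariate polynomial with
complex coefficients in the coordinates of the argument. -/
def IsPolyMapTo {ι : Type*} (dσ : ι → ℕ) {τ : Type*}
    (g : (∀ j, Fin (dσ j) → ℂ) → (τ → ℂ)) : Prop :=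
  ∃ p : τ → MvPolynomial (Σ j, Fin (dσ j)) ℂ,
    ∀ v t, g v t = MvPolynomial.eval (fun s : Σ j, Fin (dσ j) => v s.1 s.2) (p t)

/-- Inclusion of indices `{j // 2 ≤ j ∧ j ≤ r - 2}` into `{j // 2 ≤ j ∧ j ≤ r}`. -/
def incl (r : ℕ) (j : {j : ℕ // 2 ≤ j ∧ j ≤ r - 2}) : {j : ℕ // 2 ≤ j ∧ j ≤ r} :=
  ⟨j.1, j.2.1, j.2.2.trans (Nat.sub_le r 2)⟩

/-- The index `r - 1` as an element of `{j // 2 ≤ j ∧ j ≤ r}`. -/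
def idxPred (r : ℕ) (hr : 3 ≤ r) : {j : ℕ // 2 ≤ j ∧ j ≤ r} := ⟨r - 1, by omega⟩

/-- The index `r` as an element of `{j // 2 ≤ j ∧ j ≤ r}`. -/
def idxTop (r : ℕ) (hr : 3 ≤ r) : {j : ℕ // 2 ≤ j ∧ j ≤ r} := ⟨r, by omega⟩

lemma BS.aeval_scale_coeff {σ : Type*} (a : σ → ℂ) (p : MvPolynomial σ ℂ) (m : σ →₀ ℕ) :
    MvPolynomial.coeff m
        (MvPolynomial.aeval (fun s => MvPolynomial.C (a s) * MvPolynomial.X s) p)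
      = (m.prod fun s e => a s ^ e) * MvPolynomial.coeff m p := by
  classical
  have hmono : ∀ (m' : σ →₀ ℕ) (b : ℂ),
      (MvPolynomial.aeval (fun s => MvPolynomial.C (a s) * MvPolynomial.X s)
          (MvPolynomial.monomial m' b) : MvPolynomial σ ℂ)
        = MvPolynomial.monomial m' ((m'.prod fun s e => a s ^ e) * b) := by
    intro m' b
    rw [MvPolynomial.aeval_monomial]
    have h1 : (m'.prod fun i k => (MvPolynomial.C (a i) * MvPolynomial.X i) ^ k
          : MvPolynomial σ ℂ)
        = MvPolynomial.C (m'.prod fun s e => a s ^ e)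
            * m'.prod fun i k => (MvPolynomial.X i : MvPolynomial σ ℂ) ^ k := by
      simp only [Finsupp.prod, mul_pow, Finset.prod_mul_distrib, ← map_pow, ← map_prod]
    rw [h1, MvPolynomial.monomial_eq]
    rw [MvPolynomial.algebraMap_eq, map_mul]
    ring
  conv_lhs => rw [p.as_sum]
  rw [map_sum, MvPolynomial.coeff_sum]
  simp only [hmono, MvPolynomial.coeff_monomial]
  rw [Finset.sum_ite_eq' p.support m
    (fun m' => (m'.prod fun s e => a s ^ e) * MvPolynomial.coeff m' p)]
  by_cases hm : m ∈ p.support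
  · rw [if_pos hm]
  · rw [if_neg hm, MvPolynomial.notMem_support_iff.mp hm, mul_zero]

lemma BS.eval_aeval {σ τ : Type*} (φ : σ → MvPolynomial τ ℂ) (v : τ → ℂ)
    (p : MvPolynomial σ ℂ) :
    MvPolynomial.eval v (MvPolynomial.aeval φ p)
      = MvPolynomial.eval (fun x => MvPolynomial.eval v (φ x)) p := by
  rw [MvPolynomial.aeval_def, MvPolynomial.algebraMap_eq]
  have h := MvPolynomial.eval₂_assoc (f := RingHom.id ℂ) (g := v) (q := φ) (p := p)
  rw [MvPolynomial.eval, MvPolynomial.eval, MvPolynomial.coe_eval₂Hom,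
    MvPolynomial.coe_eval₂Hom, ← h]

lemma BS.support_weightedDegree {σ : Type*} (w : σ → ℕ) (j : ℕ) (p : MvPolynomial σ ℂ)
    (h : ∀ v : σ → ℂ,
      MvPolynomial.eval (fun s => 2 ^ w s * v s) p = 2 ^ j * MvPolynomial.eval v p)
    {m : σ →₀ ℕ} (hm : m ∈ p.support) : (m.sum fun s e => w s * e) = j := by
  classical
  set q := (MvPolynomial.aeval
      (fun s => MvPolynomial.C ((2 : ℂ) ^ w s) * MvPolynomial.X s) p
      : MvPolynomial σ ℂ) with hqdef
  have hq : q = MvPolynomial.C ((2 : ℂ) ^ j) * p := by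
    apply MvPolynomial.funext
    intro v
    have hv : MvPolynomial.eval v q
        = MvPolynomial.eval (fun s => (2 : ℂ) ^ w s * v s) p := by
      rw [hqdef, BS.eval_aeval]
      simp
    rw [hv, h v, map_mul, MvPolynomial.eval_C]
  have hc := congrArg (MvPolynomial.coeff m) hq
  rw [hqdef, BS.aeval_scale_coeff, MvPolynomial.coeff_C_mul] at hc
  have hpow : (m.prod fun s e => ((2 : ℂ) ^ w s) ^ e)
      = 2 ^ (m.sum fun s e => w s * e) := by
    simp only [Finsupp.prod, Finsupp.sum, ← pow_mul]
    exact Finset.prod_pow_eq_pow_sum _ _ _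
  rw [hpow] at hc
  have hne : MvPolynomial.coeff m p ≠ 0 := MvPolynomial.mem_support_iff.mp hm
  have h2 : (2 : ℂ) ^ (m.sum fun s e => w s * e) = (2 : ℂ) ^ j :=
    mul_right_cancel₀ hne hc
  have h3 : (2 : ℕ) ^ (m.sum fun s e => w s * e) = (2 : ℕ) ^ j := by
    exact_mod_cast h2
  exact Nat.pow_right_injective (by norm_num) h3

lemma BS.eval_congr_on {σ : Type*} (P : σ → Prop) (p : MvPolynomial σ ℂ)
    (hsupp : ∀ m ∈ p.support, ∀ s ∈ m.support, P s)
    (v v' : σ → ℂ) (hv : ∀ s, P s → v s = v' s) :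
    MvPolynomial.eval v p = MvPolynomial.eval v' p := by
  rw [MvPolynomial.eval_eq, MvPolynomial.eval_eq]
  refine Finset.sum_congr rfl fun m hm => ?_
  congr 1
  refine Finset.prod_congr rfl fun s hs => ?_
  rw [hv s (hsupp m hm s hs)]

lemma BS.classify {σ : Type*} (w : σ → ℕ) (r j : ℕ) (hr : 3 ≤ r) (hjr : j ≤ r)
    (hw2 : ∀ s, 2 ≤ w s) (hwr : ∀ s, w s ≤ r) (m : σ →₀ ℕ)
    (hdeg : (m.sum fun s e => w s * e) = j) :
    (∃ s, w s = j ∧ m = Finsupp.single s 1) ∨ (∀ s ∈ m.support, w s ≤ r - 2) := by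
  classical
  by_cases hB : ∀ s ∈ m.support, w s ≤ r - 2
  · exact Or.inr hB
  push_neg at hB
  obtain ⟨s, hs, hws⟩ := hB
  left
  have hms : 1 ≤ m s := Nat.one_le_iff_ne_zero.mpr (Finsupp.mem_support_iff.mp hs)
  have hterm : w s * m s ≤ j := by
    rw [← hdeg, Finsupp.sum]
    exact Finset.single_le_sum (f := fun a => w a * m a) (fun _ _ => Nat.zero_le _) hs
  have hms1 : m s = 1 := by
    by_contra hne
    have h2m : 2 ≤ m s := by omega
    have := Nat.mul_le_mul (show r - 1 ≤ w s by omega) h2m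
    omega
  have hws' : w s * m s = w s := by rw [hms1, mul_one]
  have hwsr := hwr s
  have hsum : w s * m s + ∑ s' ∈ m.support.erase s, w s' * m s' = j := by
    rw [← hdeg, Finsupp.sum]
    exact Finset.add_sum_erase _ (fun a => w a * m a) hs
  have hempty : m.support.erase s = ∅ := by
    rcases Finset.eq_empty_or_nonempty (m.support.erase s) with he | ⟨s', hs'⟩
    · exact he
    · exfalso
      have hs'm : s' ∈ m.support := Finset.mem_of_mem_erase hs'
      have h1 : 1 ≤ m s' := Nat.one_le_iff_ne_zero.mpr (Finsupp.mem_support_iff.mp hs'm)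
      have h2 : 2 ≤ w s' * m s' :=
        le_trans (hw2 s') (Nat.le_mul_of_pos_right _ (by omega))
      have h3 : w s' * m s' ≤ ∑ s'' ∈ m.support.erase s, w s'' * m s'' :=
        Finset.single_le_sum (f := fun a => w a * m a) (fun _ _ => Nat.zero_le _) hs'
      omega
  rw [hempty, Finset.sum_empty] at hsum
  refine ⟨s, by omega, ?_⟩
  ext s'
  by_cases h' : s' = s
  · subst h'
    rw [Finsupp.single_eq_same, hms1]
  · rw [Finsupp.single_eq_of_ne' (Ne.symm h')]
    by_contra hne
    have : s' ∈ m.support.erase s :=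
      Finset.mem_erase.mpr ⟨h', Finsupp.mem_support_iff.mpr hne⟩
    rw [hempty] at this
    exact absurd this (Finset.notMem_empty _)

lemma BS.decomp {ι : Type*} (d : ι → ℕ) (low : ι → Prop) [DecidablePred low] (jj : ι)
    (hjj : ¬ low jj)
    (p : MvPolynomial (Σ j, Fin (d j)) ℂ)
    (hclass : ∀ m ∈ p.support,
      (∃ i : Fin (d jj), m = Finsupp.single (⟨jj, i⟩ : Σ j, Fin (d j)) 1)
      ∨ (∀ x ∈ m.support, low (Sigma.fst x)))
    (v : (Σ j, Fin (d j)) → ℂ) :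
    MvPolynomial.eval v p
      = (∑ i : Fin (d jj),
          MvPolynomial.coeff (Finsupp.single (⟨jj, i⟩ : Σ j, Fin (d j)) 1) p * v ⟨jj, i⟩)
        + MvPolynomial.eval (fun x : Σ j, Fin (d j) => if low x.1 then v x else 0) p := by
  classical
  rw [MvPolynomial.eval_eq, MvPolynomial.eval_eq]
  have h2 : ∑ m ∈ p.support,
        (MvPolynomial.coeff m p * ∏ x ∈ m.support, (if low x.1 then v x else 0) ^ m x)
      = ∑ m ∈ p.support.filter (fun m => ∀ x ∈ m.support, low (Sigma.fst x)),
          (MvPolynomial.coeff m p * ∏ x ∈ m.support, v x ^ m x) := by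
    rw [Finset.sum_filter]
    refine Finset.sum_congr rfl fun m hm => ?_
    by_cases hPB : ∀ x ∈ m.support, low (Sigma.fst x)
    · rw [if_pos hPB]
      congr 1
      refine Finset.prod_congr rfl fun x hx => ?_
      rw [if_pos (hPB x hx)]
    · rw [if_neg hPB]
      rcases hclass m hm with ⟨i, rfl⟩ | h
      · rw [Finsupp.support_single_ne_zero _ one_ne_zero]
        simp [hjj]
      · exact absurd h hPB
  have h3 : ∑ m ∈ p.support.filter (fun m => ¬ ∀ x ∈ m.support, low (Sigma.fst x)),
        (MvPolynomial.coeff m p * ∏ x ∈ m.support, v x ^ m x)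
      = ∑ i : Fin (d jj),
          MvPolynomial.coeff (Finsupp.single (⟨jj, i⟩ : Σ j, Fin (d j)) 1) p * v ⟨jj, i⟩ := by
    have he : Function.Injective
        (fun i : Fin (d jj) => Finsupp.single (⟨jj, i⟩ : Σ j, Fin (d j)) 1) := by
      intro i i' h
      have h2 : Finsupp.single (⟨jj, i⟩ : Σ j, Fin (d j)) 1
          = Finsupp.single (⟨jj, i'⟩ : Σ j, Fin (d j)) 1 := h
      exact sigma_mk_injective (β := fun j : ι => Fin (d j)) (i := jj)
        (Finsupp.single_left_injective one_ne_zero h2)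
    have hsub : p.support.filter (fun m => ¬ ∀ x ∈ m.support, low (Sigma.fst x))
        ⊆ Finset.univ.image
          (fun i : Fin (d jj) => Finsupp.single (⟨jj, i⟩ : Σ j, Fin (d j)) 1) := by
      intro m hm
      rw [Finset.mem_filter] at hm
      rcases hclass m hm.1 with ⟨i, rfl⟩ | h
      · exact Finset.mem_image.mpr ⟨i, Finset.mem_univ _, rfl⟩
      · exact absurd h hm.2
    rw [Finset.sum_subset hsub ?_]
    · rw [Finset.sum_image (fun i _ i' _ h => he h)]
      refine Finset.sum_congr rfl fun i _ => ?_
      rw [Finsupp.support_single_ne_zero _ one_ne_zero]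
      simp
    · intro m hmT hmF
      obtain ⟨i, _, rfl⟩ := Finset.mem_image.mp hmT
      have hnPB : ¬ ∀ x ∈ (Finsupp.single (⟨jj, i⟩ : Σ j, Fin (d j)) 1).support,
          low (Sigma.fst x) := by
        intro hPB
        refine hjj (hPB ⟨jj, i⟩ ?_)
        rw [Finsupp.support_single_ne_zero _ one_ne_zero]
        exact Finset.mem_singleton_self _
      have hns : Finsupp.single (⟨jj, i⟩ : Σ j, Fin (d j)) 1 ∉ p.support := fun h =>
        hmF (Finset.mem_filter.mpr ⟨h, hnPB⟩)
      rw [MvPolynomial.notMem_support_iff.mp hns, zero_mul]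
  rw [h2, ← h3,
    ← Finset.sum_filter_add_sum_filter_not p.support
      (fun m => ∀ x ∈ m.support, low (Sigma.fst x))
      (fun m => MvPolynomial.coeff m p * ∏ x ∈ m.support, v x ^ m x)]
  ring

theorem stmt_14 (r : ℕ) (hr : 3 ≤ r) (d : {j : ℕ // 2 ≤ j ∧ j ≤ r} → ℕ)
    (f : (∀ j, Fin (d j) → ℂ) → (∀ j, Fin (d j) → ℂ))
    (hbij : Function.Bijective f)
    (hfpoly : ∀ j, IsPolyMapTo d (fun s => f s j))
    (hinvpoly : ∃ g : (∀ j, Fin (d j) → ℂ) → (∀ j, Fin (d j) → ℂ),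
      Function.LeftInverse g f ∧ Function.RightInverse g f ∧
        ∀ j, IsPolyMapTo d (fun s => g s j))
    (hequiv : ∀ c : ℂ, c ≠ 0 → ∀ s : ∀ j, Fin (d j) → ℂ,
      f (fun j => c ^ j.1 • s j) = fun j => c ^ j.1 • f s j) :
    (∀ (j : {j : ℕ // 2 ≤ j ∧ j ≤ r}) (s t : ∀ j, Fin (d j) → ℂ),
      (∀ j' : {j : ℕ // 2 ≤ j ∧ j ≤ r}, j'.1 ≤ j.1 → s j' = t j') →
        f s j = f t j) ∧
    ∃ (A₁ : (Fin (d (idxPred r hr)) → ℂ) ≃ₗ[ℂ] (Fin (d (idxPred r hr)) → ℂ))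
      (A₂ : (Fin (d (idxTop r hr)) → ℂ) ≃ₗ[ℂ] (Fin (d (idxTop r hr)) → ℂ))
      (g₁ : (∀ j : {j : ℕ // 2 ≤ j ∧ j ≤ r - 2}, Fin (d (incl r j)) → ℂ) →
              (Fin (d (idxPred r hr)) → ℂ))
      (g₂ : (∀ j : {j : ℕ // 2 ≤ j ∧ j ≤ r - 2}, Fin (d (incl r j)) → ℂ) →
              (Fin (d (idxTop r hr)) → ℂ)),
      IsPolyMapTo (fun j => d (incl r j)) g₁ ∧
      IsPolyMapTo (fun j => d (incl r j)) g₂ ∧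
      ∀ s : ∀ j, Fin (d j) → ℂ,
        f s (idxPred r hr) =
          A₁ (s (idxPred r hr)) + g₁ (fun j => s (incl r j)) ∧
        f s (idxTop r hr) =
          A₂ (s (idxTop r hr)) + g₂ (fun j => s (incl r j)) := by
  classical
  have htopval : (idxTop r hr).1 = r := rfl
  have hpredval : (idxPred r hr).1 = r - 1 := rfl
  have hfp : ∀ j, ∃ q : Fin (d j) → MvPolynomial (Σ j', Fin (d j')) ℂ,
      ∀ v t, f v j t
        = MvPolynomial.eval (fun s : Σ j', Fin (d j') => v s.1 s.2) (q t) := hfpoly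
  choose p hp using hfp
  -- weighted homogeneity of each coordinate polynomial
  have hhom : ∀ (j : {j : ℕ // 2 ≤ j ∧ j ≤ r}) (t : Fin (d j))
      (m : (Σ j', Fin (d j')) →₀ ℕ), m ∈ (p j t).support →
      (m.sum fun x e => x.1.1 * e) = j.1 := by
    intro j t m hm
    refine BS.support_weightedDegree (fun x : Σ j', Fin (d j') => x.1.1) j.1 (p j t) ?_ hm
    intro v
    have h2 := congrFun (congrFun
      (hequiv 2 (by norm_num) (fun j' i => v ⟨j', i⟩)) j) t
    rw [Pi.smul_apply, smul_eq_mul, hp, hp] at h2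
    exact h2
  -- part (i)
  have part1 : ∀ (j : {j : ℕ // 2 ≤ j ∧ j ≤ r}) (s t : ∀ j, Fin (d j) → ℂ),
      (∀ j' : {j : ℕ // 2 ≤ j ∧ j ≤ r}, j'.1 ≤ j.1 → s j' = t j') →
        f s j = f t j := by
    intro j s t hst
    funext tt
    rw [hp, hp]
    refine BS.eval_congr_on (fun x : Σ j', Fin (d j') => x.1.1 ≤ j.1) _ ?_ _ _ ?_
    · intro m hm x hx
      have hdeg := hhom j tt m hm
      have hterm : x.1.1 * m x ≤ j.1 := by
        rw [← hdeg, Finsupp.sum]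
        exact Finset.single_le_sum (f := fun a => a.1.1 * m a)
          (fun _ _ => Nat.zero_le _) hx
      have h1 : 1 ≤ m x := Nat.one_le_iff_ne_zero.mpr (Finsupp.mem_support_iff.mp hx)
      have h2 : x.1.1 ≤ x.1.1 * m x := Nat.le_mul_of_pos_right _ (by omega)
      omega
    · intro x hx
      exact congrFun (hst x.1 hx) x.2
  -- block decomposition for the two top components
  have main : ∀ jj : {j : ℕ // 2 ≤ j ∧ j ≤ r}, r - 1 ≤ jj.1 →
      ∃ (L : (Fin (d jj) → ℂ) →ₗ[ℂ] (Fin (d jj) → ℂ))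
        (g : (∀ j : {j : ℕ // 2 ≤ j ∧ j ≤ r - 2}, Fin (d (incl r j)) → ℂ) →
              (Fin (d jj) → ℂ)),
        IsPolyMapTo (fun j => d (incl r j)) g ∧
        ∀ s : ∀ j, Fin (d j) → ℂ, f s jj = L (s jj) + g (fun j => s (incl r j)) := by
    intro jj hge
    have hclass : ∀ (t : Fin (d jj)) (m : (Σ j', Fin (d j')) →₀ ℕ),
        m ∈ (p jj t).support →
        (∃ i : Fin (d jj),
            m = Finsupp.single (⟨jj, i⟩ : Σ j', Fin (d j')) 1)
        ∨ (∀ x ∈ m.support, (Sigma.fst x).1 ≤ r - 2) := by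
      intro t m hm
      rcases BS.classify (fun x : Σ j', Fin (d j') => x.1.1) r jj.1 hr jj.2.2
          (fun x => x.1.2.1) (fun x => x.1.2.2) m (hhom jj t m hm) with
        ⟨x, hwx, rfl⟩ | h
      · left
        obtain ⟨x1, x2⟩ := x
        have hx1 : x1 = jj := Subtype.ext hwx
        subst hx1
        exact ⟨x2, rfl⟩
      · exact Or.inr h
    set φ : (Σ j' : {j : ℕ // 2 ≤ j ∧ j ≤ r}, Fin (d j')) →
        MvPolynomial (Σ jl : {j : ℕ // 2 ≤ j ∧ j ≤ r - 2}, Fin (d (incl r jl))) ℂ :=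
      fun x => if h : x.1.1 ≤ r - 2 then
          MvPolynomial.X (⟨⟨x.1.1, x.1.2.1, h⟩, x.2⟩ :
            Σ jl : {j : ℕ // 2 ≤ j ∧ j ≤ r - 2}, Fin (d (incl r jl)))
        else 0 with hφ
    refine ⟨(Matrix.of fun t i => MvPolynomial.coeff
        (Finsupp.single (⟨jj, i⟩ : Σ j', Fin (d j')) 1) (p jj t)).mulVecLin,
      fun u t => MvPolynomial.eval
        (fun y : Σ jl : {j : ℕ // 2 ≤ j ∧ j ≤ r - 2}, Fin (d (incl r jl)) => u y.1 y.2)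
        (MvPolynomial.aeval φ (p jj t)),
      ⟨fun t => MvPolynomial.aeval φ (p jj t), fun v t => rfl⟩, ?_⟩
    intro s
    funext t
    have hdec := BS.decomp d (fun j => j.1 ≤ r - 2) jj (by omega) (p jj t) (hclass t)
      (fun x : Σ j', Fin (d j') => s x.1 x.2)
    have hlin : (∑ i : Fin (d jj),
          MvPolynomial.coeff (Finsupp.single (⟨jj, i⟩ : Σ j', Fin (d j')) 1) (p jj t)
            * s jj i)
        = (Matrix.of fun t i => MvPolynomial.coeff
            (Finsupp.single (⟨jj, i⟩ : Σ j', Fin (d j')) 1) (p jj t)).mulVecLin (s jj) t := by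
      simp [Matrix.mulVecLin_apply, Matrix.mulVec, dotProduct]
    have hlow : (MvPolynomial.eval
          (fun x : Σ j', Fin (d j') => if x.1.1 ≤ r - 2 then s x.1 x.2 else 0)) (p jj t)
        = MvPolynomial.eval
            (fun y : Σ jl : {j : ℕ // 2 ≤ j ∧ j ≤ r - 2}, Fin (d (incl r jl)) =>
              s (incl r y.1) y.2)
            (MvPolynomial.aeval φ (p jj t)) := by
      rw [BS.eval_aeval]
      have hpt : (fun x : Σ j', Fin (d j') =>
            MvPolynomial.eval
              (fun y : Σ jl : {j : ℕ // 2 ≤ j ∧ j ≤ r - 2}, Fin (d (incl r jl)) =>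
                s (incl r y.1) y.2) (φ x))
          = fun x : Σ j', Fin (d j') => if x.1.1 ≤ r - 2 then s x.1 x.2 else 0 := by
        funext x
        by_cases h : x.1.1 ≤ r - 2
        · rw [hφ]
          dsimp only
          rw [dif_pos h, MvPolynomial.eval_X, if_pos h]
          rfl
        · rw [hφ]
          dsimp only
          rw [dif_neg h, map_zero, if_neg h]
      rw [hpt]
    rw [Pi.add_apply, hp jj s t, hdec]
    exact congrArg₂ (· + ·) hlin hlow
  obtain ⟨L₂, g₂, hg₂, hid₂⟩ := main (idxTop r hr) (Nat.sub_le r 1)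
  obtain ⟨L₁, g₁, hg₁, hid₁⟩ := main (idxPred r hr) le_rfl
  -- injectivity of L₂
  have hinj₂ : Function.Injective L₂ := by
    intro x y hxy
    have hfeq : f (Function.update (0 : ∀ j, Fin (d j) → ℂ) (idxTop r hr) x)
        = f (Function.update (0 : ∀ j, Fin (d j) → ℂ) (idxTop r hr) y) := by
      funext j'
      rcases lt_trichotomy j'.1 r with hlt | heq | hgt
      · refine part1 j' _ _ (fun j'' hle => ?_)
        have hne : j'' ≠ idxTop r hr := by
          intro h
          have hv : j''.1 = r := congrArg Subtype.val h
          omega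
        rw [Function.update_of_ne hne, Function.update_of_ne hne]
      · have hj' : j' = idxTop r hr := Subtype.ext heq
        subst hj'
        have harg : (fun jl : {j : ℕ // 2 ≤ j ∧ j ≤ r - 2} =>
              Function.update (0 : ∀ j, Fin (d j) → ℂ) (idxTop r hr) x (incl r jl))
            = (fun jl : {j : ℕ // 2 ≤ j ∧ j ≤ r - 2} =>
              Function.update (0 : ∀ j, Fin (d j) → ℂ) (idxTop r hr) y (incl r jl)) := by
          funext jl
          have hne : incl r jl ≠ idxTop r hr := by
            intro h
            have hv : jl.1 = r := congrArg Subtype.val h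
            have := jl.2.2
            omega
          rw [Function.update_of_ne hne, Function.update_of_ne hne]
        rw [hid₂, hid₂, Function.update_self, Function.update_self, hxy, harg]
      · exact absurd hgt (by have := j'.2.2; omega)
    have h0 := congrFun (hbij.injective hfeq) (idxTop r hr)
    rw [Function.update_self, Function.update_self] at h0
    exact h0
  -- injectivity of L₁
  have hinj₁ : Function.Injective L₁ := by
    intro x y hxy
    have hfeq : f (Function.update (0 : ∀ j, Fin (d j) → ℂ) (idxPred r hr) x)
        = f (Function.update (0 : ∀ j, Fin (d j) → ℂ) (idxPred r hr) y) := by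
      funext j'
      rcases lt_trichotomy j'.1 (r - 1) with hlt | heq | hgt
      · refine part1 j' _ _ (fun j'' hle => ?_)
        have hne : j'' ≠ idxPred r hr := by
          intro h
          have hv : j''.1 = r - 1 := congrArg Subtype.val h
          omega
        rw [Function.update_of_ne hne, Function.update_of_ne hne]
      · have hj' : j' = idxPred r hr := Subtype.ext heq
        subst hj'
        have harg : (fun jl : {j : ℕ // 2 ≤ j ∧ j ≤ r - 2} =>
              Function.update (0 : ∀ j, Fin (d j) → ℂ) (idxPred r hr) x (incl r jl))
            = (fun jl : {j : ℕ // 2 ≤ j ∧ j ≤ r - 2} =>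
              Function.update (0 : ∀ j, Fin (d j) → ℂ) (idxPred r hr) y (incl r jl)) := by
          funext jl
          have hne : incl r jl ≠ idxPred r hr := by
            intro h
            have hv : jl.1 = r - 1 := congrArg Subtype.val h
            have := jl.2.2
            omega
          rw [Function.update_of_ne hne, Function.update_of_ne hne]
        rw [hid₁, hid₁, Function.update_self, Function.update_self, hxy, harg]
      · have hj' : j' = idxTop r hr := Subtype.ext (by have := j'.2.2; omega)
        subst hj'
        rw [hid₂, hid₂]
        have hneT : idxTop r hr ≠ idxPred r hr := by
          intro h
          have hv : r = r - 1 := congrArg Subtype.val h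
          omega
        have harg : (fun jl : {j : ℕ // 2 ≤ j ∧ j ≤ r - 2} =>
              Function.update (0 : ∀ j, Fin (d j) → ℂ) (idxPred r hr) x (incl r jl))
            = (fun jl : {j : ℕ // 2 ≤ j ∧ j ≤ r - 2} =>
              Function.update (0 : ∀ j, Fin (d j) → ℂ) (idxPred r hr) y (incl r jl)) := by
          funext jl
          have hne : incl r jl ≠ idxPred r hr := by
            intro h
            have hv : jl.1 = r - 1 := congrArg Subtype.val h
            have := jl.2.2
            omega
          rw [Function.update_of_ne hne, Function.update_of_ne hne]
        rw [Function.update_of_ne hneT, Function.update_of_ne hneT, harg]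
    have h0 := congrFun (hbij.injective hfeq) (idxPred r hr)
    rw [Function.update_self, Function.update_self] at h0
    exact h0
  refine ⟨part1,
    LinearEquiv.ofBijective L₁ ⟨hinj₁, LinearMap.injective_iff_surjective.mp hinj₁⟩,
    LinearEquiv.ofBijective L₂ ⟨hinj₂, LinearMap.injective_iff_surjective.mp hinj₂⟩,
    g₁, g₂, hg₁, hg₂, fun s => ⟨?_, ?_⟩⟩
  · rw [hid₁ s]; rfl
  · rw [hid₂ s]; rfl
end

section
/- Let A be a commutative ring which is an integral domain and an algebra over ℂ, let r ≥ 1 be an integer, and let V be a ℂ-subspace of A of finite dimension g ≥ 1. Then there exists a ℂ-basis w_1, …, w_g of V such that the elements w_1^r, …, w_g^r of A are linearly independent over ℂ. -/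
/-!
Build the basis one vector at a time. Let `w₁, …, wₘ ∈ V` be independent with independent `r`-th
powers, `S = span wᵢ ⊊ V` and `W = span wᵢ ^ r`. If `z ^ r ∈ W` for every `z ∈ V \ S`, fix
`v ∈ V \ S`: then `(v + t • wᵢ) ^ r ∈ W` for all scalars `t`, and the coefficient of `t` gives
`v ^ (r - 1) * wᵢ ∈ W`. Together with `v ^ r ∈ W` this puts the `m + 1` elements
`v ^ (r - 1) * wᵢ`, `v ^ (r - 1) * v` in the `m`-dimensional space `W`; they are independent because
multiplication by `v ^ (r - 1) ≠ 0` is injective in a domain. Hence some `z ∈ V \ S` has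
`z ^ r ∉ W`, and appending it extends the family.
-/

open Finset Submodule Module

section

variable {K : Type*} [Field K]

lemma Submodule.coeff_mem_of_forall_sum_smul_pow_mem [Infinite K] {M : Type*} [AddCommGroup M]
    [Module K M] (W : Submodule K M) {n : ℕ} (a : ℕ → M)
    (h : ∀ t : K, ∑ k ∈ range n, t ^ k • a k ∈ W) {k : ℕ} (hk : k < n) : a k ∈ W := by
  rw [← Quotient.mk_eq_zero, ← forall_dual_apply_eq_zero_iff K]
  intro φ
  set p : Polynomial K := ∑ j ∈ range n, Polynomial.C (φ (W.mkQ (a j))) * Polynomial.X ^ j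
  have hp : p = 0 := Polynomial.funext fun t => by
    have := congrArg φ ((Quotient.mk_eq_zero W).2 (h t))
    rw [← mkQ_apply, map_sum, map_sum] at this
    simp only [p, Polynomial.eval_finsetSum, Polynomial.eval_mul, Polynomial.eval_C,
      Polynomial.eval_pow, Polynomial.eval_X, Polynomial.eval_zero, map_smul, map_zero,
      smul_eq_mul] at this ⊢
    simpa only [mul_comm] using this
  simpa [p, Polynomial.finsetSum_coeff, Polynomial.coeff_X_pow, hk] using
    congrArg (·.coeff k) hp

variable {A : Type*} [CommRing A] [Algebra K A]

lemma LinearIndependent.mul_left [IsDomain A] {ι : Type*} {u : ι → A}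
    (hu : LinearIndependent K u) {c : A} (hc : c ≠ 0) : LinearIndependent K fun i => c * u i :=
  hu.map' (LinearMap.mulLeft K c) (LinearMap.ker_eq_bot.2 (mul_right_injective₀ hc))

variable [CharZero K]

lemma Submodule.pow_sub_one_mul_mem_of_forall_add_smul_pow_mem (W : Submodule K A) {r : ℕ}
    (hr : r ≠ 0) {v w : A} (h : ∀ t : K, (v + t • w) ^ r ∈ W) : v ^ (r - 1) * w ∈ W := by
  have hexp (t : K) : (v + t • w) ^ r =
      ∑ k ∈ range (r + 1), t ^ k • (w ^ k * v ^ (r - k) * (r.choose k : A)) := by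
    rw [add_comm, add_pow]
    refine sum_congr rfl fun k _ => ?_
    rw [smul_pow, smul_mul_assoc, smul_mul_assoc]
  have hcoeff := W.coeff_mem_of_forall_sum_smul_pow_mem _ (fun t => hexp t ▸ h t)
    (k := 1) (by omega)
  have hrK : (r : K) ≠ 0 := Nat.cast_ne_zero.2 hr
  convert W.smul_mem (r : K)⁻¹ hcoeff using 1
  rw [Nat.choose_one_right, pow_one, ← map_natCast (algebraMap K A),
    mul_comm _ (algebraMap K A _), ← Algebra.smul_def, inv_smul_smul₀ hrK, mul_comm]

variable [IsDomain A] {r : ℕ}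

lemma exists_mem_notMem_span_pow_notMem_span_pow (hr : r ≠ 0) {V : Submodule K A} {m : ℕ}
    {w : Fin m → A} (hwV : ∀ i, w i ∈ V) (hw : LinearIndependent K w)
    (hwr : LinearIndependent K fun i => w i ^ r) (hlt : span K (Set.range w) < V) :
    ∃ z ∈ V, z ∉ span K (Set.range w) ∧ z ^ r ∉ span K (Set.range fun i => w i ^ r) := by
  set S := span K (Set.range w)
  set W := span K (Set.range fun i => w i ^ r)
  by_contra! hpow
  obtain ⟨v, hvV, hvS⟩ := SetLike.exists_of_lt hlt
  have hmul_mem (i : Fin m) : v ^ (r - 1) * w i ∈ W :=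
    W.pow_sub_one_mul_mem_of_forall_add_smul_pow_mem hr fun t =>
      hpow _ (V.add_mem hvV (V.smul_mem t (hwV i))) fun hS =>
        hvS (by simpa using S.sub_mem hS (S.smul_mem t (subset_span (Set.mem_range_self i))))
  have hlast : v ^ (r - 1) * v = v ^ r := by
    rw [← pow_succ, Nat.sub_add_cancel (Nat.one_le_iff_ne_zero.2 hr)]
  set u : Fin (m + 1) → A := fun j => v ^ (r - 1) * (Fin.snoc w v : Fin (m + 1) → A) j
  have hu : LinearIndependent K u :=
    (linearIndependent_finSnoc.2 ⟨hw, hvS⟩).mul_left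
      (pow_ne_zero _ fun hv => hvS (hv ▸ S.zero_mem))
  have huW : span K (Set.range u) ≤ W := by
    refine span_le.2 (Set.range_subset_iff.2 fun j => ?_)
    induction j using Fin.lastCases with
    | last => simpa [u, hlast] using hpow v hvV hvS
    | cast i => simpa [u] using hmul_mem i
  have : FiniteDimensional K W := .span_of_finite K (Set.finite_range _)
  have := finrank_mono huW
  rw [finrank_span_eq_card hu, finrank_span_eq_card hwr, Fintype.card_fin,
    Fintype.card_fin] at this
  omega

lemma exists_linearIndependent_pow_of_le_finrank (hr : r ≠ 0) (V : Submodule K A) :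
    ∀ m ≤ finrank K V, ∃ w : Fin m → A,
      (∀ i, w i ∈ V) ∧ LinearIndependent K w ∧ LinearIndependent K fun i => w i ^ r
  | 0, _ =>
    ⟨Fin.elim0, fun i => i.elim0, linearIndependent_empty_type, linearIndependent_empty_type⟩
  | m + 1, hm => by
    obtain ⟨w, hwV, hw, hwr⟩ := exists_linearIndependent_pow_of_le_finrank hr V m (by omega)
    have hlt : span K (Set.range w) < V := by
      refine lt_of_le_of_ne (span_le.2 (Set.range_subset_iff.2 hwV)) fun h => ?_
      have := finrank_span_eq_card hw
      rw [h, Fintype.card_fin] at this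
      omega
    obtain ⟨z, hzV, hzS, hzW⟩ := exists_mem_notMem_span_pow_notMem_span_pow hr hwV hw hwr hlt
    refine ⟨Fin.snoc w z, Fin.lastCases (by simpa) (by simpa),
      linearIndependent_finSnoc.2 ⟨hw, hzS⟩, ?_⟩
    rw [show (fun j => Fin.snoc w z j ^ r) = Fin.snoc (fun i => w i ^ r) (z ^ r) from
      Fin.comp_snoc (· ^ r) w z]
    exact linearIndependent_finSnoc.2 ⟨hwr, hzW⟩

end

theorem stmt_15_general {A : Type*} [CommRing A] [IsDomain A] [Algebra ℂ A]
    (r : ℕ) (hr : 1 ≤ r)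
    (V : Submodule ℂ A) (hfin : FiniteDimensional ℂ V)
    (g : ℕ) (hdim : Module.finrank ℂ V = g) :
    ∃ w : Fin g → A, (∀ i, w i ∈ V) ∧ LinearIndependent ℂ w ∧
      Submodule.span ℂ (Set.range w) = V ∧
      LinearIndependent ℂ (fun i => (w i) ^ r) := by
  obtain ⟨w, hwV, hw, hwr⟩ :=
    exists_linearIndependent_pow_of_le_finrank (Nat.one_le_iff_ne_zero.mp hr) V g hdim.ge
  refine ⟨w, hwV, hw, eq_of_le_of_finrank_eq (span_le.2 (Set.range_subset_iff.2 hwV)) ?_, hwr⟩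
  rw [finrank_span_eq_card hw, hdim, Fintype.card_fin]

theorem stmt_15 {A : Type*} [CommRing A] [IsDomain A] [Algebra ℂ A]
    (r : ℕ) (hr : 1 ≤ r)
    (V : Submodule ℂ A) (hfin : FiniteDimensional ℂ V)
    (g : ℕ) (hg : 1 ≤ g) (hdim : Module.finrank ℂ V = g) :
    ∃ w : Fin g → A, (∀ i, w i ∈ V) ∧ LinearIndependent ℂ w ∧
      Submodule.span ℂ (Set.range w) = V ∧
      LinearIndependent ℂ (fun i => (w i) ^ r) :=
  stmt_15_general r hr V hfin g hdim
end

section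
/- Let g ≥ 2, n ≥ 1, and r ≥ 3 be integers, and define h : ℕ → ℤ by h(1) = g and h(j) = j(2g−2) + (j−1)n − g + 1 for j ≥ 2. Then: (a) for every integer d with 1 < d and 2d < r, Σ_{j=1}^{d} h(j) + Σ_{j=2}^{r−2d} h(j) < Σ_{j=1}^{r−2} h(j) (the second sum being empty when r−2d < 2); and (b) if r is even, Σ_{j=2}^{r/2} h(j) < Σ_{j=1}^{r−2} h(j). -/
/-!
Since `h 1` exceeds the linear formula for `h j` by one, `2 ∑_{j=1}^m h j = p(m) + 2` with
`p(m) = 2(g-1)m² + n m(m-1)`. For `g ≥ 1` and `n ≥ 0` the polynomial `p` is superadditive and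
monotone on `m ≥ 0`, so both inequalities reduce to `p(a) + p(b) ≤ p(c)` for `a + b ≤ c`
(with `a = d`, `b = r - 2d`, resp. `a = r/2`, `b = 0`, and `c = r - 2`); the strict inequality
comes from the extra `-2g` in the sums starting at `j = 2`.
-/

open Finset

def partialSumPoly (g n m : ℤ) : ℤ := 2 * (g - 1) * m ^ 2 + n * m * (m - 1)

section PartialSums

variable {g n : ℤ} {h : ℕ → ℤ}

theorem two_mul_sum_Icc_one_eq (h1 : h 1 = g)
    (hj : ∀ j : ℕ, 2 ≤ j → h j = (j : ℤ) * (2 * g - 2) + ((j : ℤ) - 1) * n - g + 1)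
    {m : ℕ} (hm : 1 ≤ m) :
    2 * ∑ j ∈ Icc 1 m, h j = partialSumPoly g n m + 2 := by
  induction m, hm using Nat.le_induction with
  | base => simp [partialSumPoly, h1]; ring
  | succ m hm ih =>
    rw [sum_Icc_succ_top (by omega), mul_add, ih, hj (m + 1) (by omega)]
    simp only [partialSumPoly]
    push_cast
    ring

theorem two_mul_sum_Icc_two_eq (h1 : h 1 = g)
    (hj : ∀ j : ℕ, 2 ≤ j → h j = (j : ℤ) * (2 * g - 2) + ((j : ℤ) - 1) * n - g + 1)
    {m : ℕ} (hm : 1 ≤ m) :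
    2 * ∑ j ∈ Icc 2 m, h j = partialSumPoly g n m + 2 - 2 * g := by
  have hsplit : ∑ j ∈ Icc 1 m, h j = g + ∑ j ∈ Icc 2 m, h j := by
    rw [← add_sum_Ioc_eq_sum_Icc hm, h1]; rfl
  have hone := two_mul_sum_Icc_one_eq h1 hj hm
  linarith

end PartialSums

theorem partialSumPoly_add_le {g n a b c : ℤ} (hg : 1 ≤ g) (hn : 0 ≤ n) (ha : 0 ≤ a) (hb : 0 ≤ b)
    (hc : a + b ≤ c) : partialSumPoly g n a + partialSumPoly g n b ≤ partialSumPoly g n c := by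
  obtain ⟨x, hx, rfl⟩ : ∃ x, 0 ≤ x ∧ c = a + b + x := ⟨c - a - b, by linarith, by ring⟩
  have hsq : 0 ≤ x ^ 2 + 2 * x * (a + b) + 2 * a * b := by positivity
  have hpronic : 0 ≤ x ^ 2 - x + 2 * x * (a + b) + 2 * a * b := by
    nlinarith [Int.le_self_sq x, mul_nonneg hx (add_nonneg ha hb), mul_nonneg ha hb]
  have hdiff : partialSumPoly g n (a + b + x) - partialSumPoly g n a - partialSumPoly g n b =
      2 * (g - 1) * (x ^ 2 + 2 * x * (a + b) + 2 * a * b) +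
        n * (x ^ 2 - x + 2 * x * (a + b) + 2 * a * b) := by
    simp only [partialSumPoly]; ring
  linarith [mul_nonneg (sub_nonneg.2 hg) hsq, mul_nonneg hn hpronic]

theorem stmt_18 (g n : ℤ) (r : ℕ) (hg : 2 ≤ g) (hn : 1 ≤ n) (hr : 3 ≤ r)
    (h : ℕ → ℤ) (h1 : h 1 = g)
    (hj : ∀ j : ℕ, 2 ≤ j → h j = (j : ℤ) * (2 * g - 2) + ((j : ℤ) - 1) * n - g + 1) :
    (∀ d : ℕ, 1 < d → 2 * d < r →
      (∑ j ∈ Finset.Icc 1 d, h j) + (∑ j ∈ Finset.Icc 2 (r - 2 * d), h j) <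
        ∑ j ∈ Finset.Icc 1 (r - 2), h j) ∧
    (Even r → (∑ j ∈ Finset.Icc 2 (r / 2), h j) < ∑ j ∈ Finset.Icc 1 (r - 2), h j) := by
  constructor
  · intro d hd hdr
    have hpoly := partialSumPoly_add_le (g := g) (n := n) (a := d) (b := ((r - 2 * d : ℕ) : ℤ))
      (c := ((r - 2 : ℕ) : ℤ)) (by omega) (by omega) (by omega) (by omega) (by omega)
    have hd := two_mul_sum_Icc_one_eq h1 hj (m := d) (by omega)
    have hrest := two_mul_sum_Icc_two_eq h1 hj (m := r - 2 * d) (by omega)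
    have htotal := two_mul_sum_Icc_one_eq h1 hj (m := r - 2) (by omega)
    linarith
  · rintro ⟨k, rfl⟩
    rw [show (k + k) / 2 = k by omega]
    have hpoly := partialSumPoly_add_le (g := g) (n := n) (a := k) (b := 0)
      (c := ((k + k - 2 : ℕ) : ℤ)) (by omega) (by omega) (by omega) (by omega) (by omega)
    have hhalf := two_mul_sum_Icc_two_eq h1 hj (m := k) (by omega)
    have htotal := two_mul_sum_Icc_one_eq h1 hj (m := k + k - 2) (by omega)
    rw [show partialSumPoly g n 0 = 0 by simp [partialSumPoly], add_zero] at hpoly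
    linarith
end

section
/- Let R be a commutative ring, z ∈ R, n ≥ 1, and let S : Matrix (Fin n) (Fin n) R satisfy z ∣ S i j whenever (j:ℕ) ≤ (i:ℕ) (all entries on and below the diagonal are divisible by z). Then z² divides det S − (−1)^{n+1} · (S (n−1) 0) · ∏_{i=0}^{n−2} S i (i+1). In particular, z² divides det S if and only if z² divides (S (n−1) 0) · ∏_{i=0}^{n−2} S i (i+1). -/
/-!
Expand `det S = ∑_σ sign σ ∏ᵢ S (σ i) i`. The entry `S (σ i) i` is divisible by `z` whenever
`i ≤ σ i`, and this holds at least for `i = σ⁻¹ (n - 1)`. If it held for no other `i`, then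
`σ i < i` away from that one index, so `i ↦ σ (i + 1)` never increases and is the identity:
`σ` is the cyclic shift `i ↦ i - 1`.
So every other permutation has two entries divisible by `z`, and its term is divisible by `z²`.
-/

open Finset Equiv

theorem Function.Injective.eq_id_of_forall_apply_le {α : Type*} [LinearOrder α]
    [WellFoundedLT α] {f : α → α} (hf : Function.Injective f) (hle : ∀ i, f i ≤ i) : f = id := by
  funext i
  induction i using WellFoundedLT.induction with
  | ind i ih =>
    refine (hle i).eq_or_lt.resolve_right fun hlt => hlt.ne ?_
    exact hf (ih (f i) hlt)

theorem Equiv.Perm.eq_finRotate_symm_of_forall_ne_apply_lt {m : ℕ} (σ : Perm (Fin (m + 1)))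
    {i₀ : Fin (m + 1)} (h : ∀ i, i ≠ i₀ → σ i < i) : σ = (finRotate (m + 1)).symm := by
  have hi₀ : i₀ = 0 := by
    by_contra hne
    exact Fin.not_lt_zero _ (h 0 (Ne.symm hne))
  have hle : ∀ i, (σ * finRotate (m + 1)) i ≤ i := by
    intro i
    by_cases hi : i = Fin.last m
    · exact hi ▸ Fin.le_last _
    · have hsucc := coe_finRotate_of_ne_last hi
      have hlt := h (finRotate (m + 1) i) fun h0 =>
        Nat.succ_ne_zero _ (hsucc.symm.trans (congrArg Fin.val (h0.trans hi₀)))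
      rw [Fin.lt_def, hsucc] at hlt
      exact Fin.le_def.mpr (Nat.lt_succ_iff.mp hlt)
  have hone : σ * finRotate (m + 1) = 1 :=
    Equiv.ext (congrFun ((Equiv.injective _).eq_id_of_forall_apply_le hle))
  exact mul_eq_one_iff_eq_inv.mp hone

theorem Equiv.Perm.exists_ne_le_apply_of_ne_finRotate_symm {m : ℕ} {σ : Perm (Fin (m + 1))}
    (hσ : σ ≠ (finRotate (m + 1)).symm) : ∃ i j, i ≠ j ∧ i ≤ σ i ∧ j ≤ σ j := by
  refine ⟨σ.symm (Fin.last m), ?_⟩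
  by_contra! hall
  refine hσ (σ.eq_finRotate_symm_of_forall_ne_apply_lt fun j hj => hall j (Ne.symm hj) ?_)
  simpa using Fin.le_last _

theorem Matrix.sq_dvd_det_sub_finRotate_term {R : Type*} [CommRing R] {z : R} {m : ℕ}
    (S : Matrix (Fin (m + 1)) (Fin (m + 1)) R) (hS : ∀ i j, j ≤ i → z ∣ S i j) :
    z ^ 2 ∣ S.det - Perm.sign (finRotate (m + 1)).symm •
      ∏ i, S ((finRotate (m + 1)).symm i) i := by
  rw [Matrix.det_apply, ← Finset.add_sum_erase _ _ (mem_univ (finRotate (m + 1)).symm),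
    add_sub_cancel_left]
  refine Finset.dvd_sum fun σ hσ => dvd_smul_of_dvd _ ?_
  obtain ⟨i, j, hij, hi, hj⟩ := Perm.exists_ne_le_apply_of_ne_finRotate_symm (ne_of_mem_erase hσ)
  calc z ^ 2 = z * z := sq z
    _ ∣ S (σ i) i * S (σ j) j := mul_dvd_mul (hS _ _ hi) (hS _ _ hj)
    _ = ∏ k ∈ {i, j}, S (σ k) k := (prod_pair (f := fun k => S (σ k) k) hij).symm
    _ ∣ ∏ k, S (σ k) k := prod_dvd_prod_of_subset _ _ _ (subset_univ _)

theorem finRotate_symm_zero (m : ℕ) : (finRotate (m + 1)).symm 0 = Fin.last m :=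
  (finRotate _).symm_apply_eq.mpr finRotate_last.symm

theorem finRotate_symm_succ {m : ℕ} (i : Fin m) : (finRotate (m + 1)).symm i.succ = i.castSucc :=
  (finRotate _).symm_apply_eq.mpr (Fin.ext (coe_finRotate_of_ne_last i.castSucc_ne_last)).symm

theorem Fin.prod_univ_finRotate_symm {M : Type*} [CommMonoid M] {m : ℕ}
    (f : Fin (m + 1) → Fin (m + 1) → M) :
    ∏ i, f ((finRotate (m + 1)).symm i) i = f (Fin.last m) 0 * ∏ i : Fin m, f i.castSucc i.succ := by
  simp only [Fin.prod_univ_succ, finRotate_symm_zero, finRotate_symm_succ]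

theorem stmt_19 {R : Type*} [CommRing R] (z : R) {n : ℕ} (hn : 1 ≤ n)
    (S : Matrix (Fin n) (Fin n) R)
    (hS : ∀ i j : Fin n, (j : ℕ) ≤ (i : ℕ) → z ∣ S i j) :
    z ^ 2 ∣ S.det - (-1) ^ (n + 1) * S ⟨n - 1, by omega⟩ ⟨0, by omega⟩ *
        ∏ i : Fin (n - 1), S ⟨i.1, by have := i.isLt; omega⟩ ⟨i.1 + 1, by have := i.isLt; omega⟩ ∧
    (z ^ 2 ∣ S.det ↔
      z ^ 2 ∣ S ⟨n - 1, by omega⟩ ⟨0, by omega⟩ *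
        ∏ i : Fin (n - 1), S ⟨i.1, by have := i.isLt; omega⟩ ⟨i.1 + 1, by have := i.isLt; omega⟩) := by
  obtain ⟨m, rfl⟩ : ∃ m, n = m + 1 := ⟨n - 1, by omega⟩
  have key : z ^ 2 ∣ S.det - (-1) ^ (m + 1 + 1) *
      (S (Fin.last m) 0 * ∏ i : Fin m, S i.castSucc i.succ) := by
    have h := S.sq_dvd_det_sub_finRotate_term hS
    rw [Perm.sign_symm, sign_finRotate, Fin.prod_univ_finRotate_symm (S · ·)] at h
    convert h using 2
    simp [Units.smul_def, pow_succ]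
  refine ⟨by rwa [← mul_assoc] at key, ?_⟩
  exact (dvd_iff_dvd_of_dvd_sub key).trans ((isUnit_one.neg.pow _).dvd_mul_left)
end
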